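/- arXiv:2604.09986 — 11 statements merged into one kernel-verified Lean document; each statement's English description precedes it below -/
import Mathlib

section
/- Let Σ be an arbitrary p×p real symmetric positive definite matrix, and let w^L be the unique solution of the long-only minimum variance problem: minimize wᵀΣw over all w ∈ ℝᵖ satisfying wᵀ1_p = 1 and w_i ≥ 0 for all i. Let K = {i : w^L_i > 0} be the set of active assets and k = |K|. Let w^K denote the k-vector obtained from w^L by deleting the zero entries outside K, and let Σ^K be the k×k principal submatrix of Σ obtained by deleting the rows and columns not in K. Then Σ^K is invertible and w^K = (Σ^K)⁻¹ 1_k / (1_kᵀ (Σ^K)⁻¹ 1_k); that is, w^K is the unique solution of the unconstrained fully invested minimum variance problem (minimize vᵀΣ^K v subject to vᵀ1_k = 1) for the reduced asset set K, and w^L is recovered from w^K by inserting zero entries for the deleted indices. -/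
/-!
The LOMV solution `w` minimises `Q v = vᵀ Σ v` on the standard simplex. Shifting mass between two
active assets keeps `w` feasible for small steps in both directions, so the first-order condition
forces the gradient `Σ w` to take one value `c` on `K`; as `w` vanishes off `K`, this reads
`Σ^K w^K = c 1`. The principal submatrix `Σ^K` is positive definite, so `w^K = c (Σ^K)⁻¹ 1` and
the normalisation `∑ w^K = 1` fixes `c`. Finally, for every `v` with `∑ v = 1` the cross term
vanishes and `Q_K v = Q_K w^K + Q_K (v - w^K)`, whence unique minimality.
-/

open Matrix Finset Filter Topology

theorem Finset.sum_coe_sort_eq_sum_univ {ι M : Type*} [Fintype ι] [AddCommMonoid M]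
    {s : Finset ι} {f : ι → M} (hf : ∀ i ∉ s, f i = 0) : ∑ i : s, f i = ∑ i, f i := by
  rw [Finset.sum_coe_sort s f]
  exact Finset.sum_subset (subset_univ s) fun i _ hi => hf i hi

namespace Matrix

variable {ι : Type*} [Fintype ι]

theorem sum_sum_mul_mul_eq_dotProduct_mulVec (M : Matrix ι ι ℝ) (v : ι → ℝ) :
    ∑ i, ∑ j, v i * M i j * v j = v ⬝ᵥ M *ᵥ v := by
  simp only [dotProduct, mulVec, Finset.mul_sum, mul_assoc]

theorem IsSymm.add_dotProduct_mulVec_add {M : Matrix ι ι ℝ} (hM : M.IsSymm) (x d : ι → ℝ) :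
    (x + d) ⬝ᵥ M *ᵥ (x + d) = x ⬝ᵥ M *ᵥ x + 2 * (M *ᵥ x ⬝ᵥ d) + d ⬝ᵥ M *ᵥ d := by
  have hxd : x ⬝ᵥ M *ᵥ d = M *ᵥ x ⬝ᵥ d := by
    rw [dotProduct_mulVec, ← mulVec_transpose, hM.eq]
  rw [mulVec_add, dotProduct_add, add_dotProduct, add_dotProduct, hxd, dotProduct_comm d]
  ring

theorem IsSymm.dotProduct_mulVec_nonneg_of_isMinOn {M : Matrix ι ι ℝ} (hM : M.IsSymm)
    {C : Set (ι → ℝ)} {x d : ι → ℝ} (hx : IsMinOn (fun v => v ⬝ᵥ M *ᵥ v) C x) {t₀ : ℝ}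
    (ht₀ : 0 < t₀) (hd : ∀ t ∈ Set.Ioc 0 t₀, x + t • d ∈ C) :
    0 ≤ M *ᵥ x ⬝ᵥ d := by
  have hslope : ∀ t ∈ Set.Ioc 0 t₀, 0 ≤ 2 * (M *ᵥ x ⬝ᵥ d) + t * (d ⬝ᵥ M *ᵥ d) := by
    intro t ht
    have hle : x ⬝ᵥ M *ᵥ x ≤ (x + t • d) ⬝ᵥ M *ᵥ (x + t • d) := hx (hd t ht)
    rw [hM.add_dotProduct_mulVec_add, dotProduct_smul, mulVec_smul, dotProduct_smul,
      smul_dotProduct] at hle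
    simp only [smul_eq_mul] at hle
    nlinarith [ht.1]
  have hlim : Tendsto (fun t => 2 * (M *ᵥ x ⬝ᵥ d) + t * (d ⬝ᵥ M *ᵥ d)) (𝓝[>] 0)
      (𝓝 (2 * (M *ᵥ x ⬝ᵥ d))) := by
    refine tendsto_nhdsWithin_of_tendsto_nhds ?_
    have hcont : Continuous fun t : ℝ => 2 * (M *ᵥ x ⬝ᵥ d) + t * (d ⬝ᵥ M *ᵥ d) := by fun_prop
    simpa using hcont.tendsto 0
  have := ge_of_tendsto hlim (eventually_of_mem (Ioc_mem_nhdsGT ht₀) hslope)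
  linarith

theorem IsSymm.mulVec_apply_le_of_isMinOn_stdSimplex [DecidableEq ι] {M : Matrix ι ι ℝ}
    (hM : M.IsSymm) {x : ι → ℝ} (hx : IsMinOn (fun v => v ⬝ᵥ M *ᵥ v) (stdSimplex ℝ ι) x)
    (hxΔ : x ∈ stdSimplex ℝ ι) (i : ι) {j : ι} (hj : 0 < x j) :
    (M *ᵥ x) j ≤ (M *ᵥ x) i := by
  -- moving mass `t ≤ x j` from `j` to `i` stays in the simplex
  have hfeas : ∀ t ∈ Set.Ioc 0 (x j),
      x + t • (Pi.single i 1 - Pi.single j 1) ∈ stdSimplex ℝ ι := by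
    rintro t ⟨ht, htj⟩
    refine ⟨fun k => ?_, ?_⟩
    · have := hxΔ.1 k
      simp only [Pi.add_apply, Pi.smul_apply, Pi.sub_apply, Pi.single_apply, smul_eq_mul]
      split_ifs with hki hkj <;> subst_vars <;> linarith
    · simp [Finset.sum_add_distrib, ← Finset.mul_sum, Finset.sum_sub_distrib, hxΔ.2]
  have := hM.dotProduct_mulVec_nonneg_of_isMinOn hx hj hfeas
  simpa [dotProduct_sub] using this

theorem IsSymm.dotProduct_mulVec_eq_add_of_mulVec_eq_const {M : Matrix ι ι ℝ} (hM : M.IsSymm)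
    {x v : ι → ℝ} {c : ℝ} (hc : M *ᵥ x = fun _ => c) (hv : ∑ i, v i = ∑ i, x i) :
    v ⬝ᵥ M *ᵥ v = x ⬝ᵥ M *ᵥ x + (v - x) ⬝ᵥ M *ᵥ (v - x) := by
  have hgrad : M *ᵥ x ⬝ᵥ (v - x) = 0 := by
    simp [hc, dotProduct, ← Finset.mul_sum, Finset.sum_sub_distrib, hv]
  simpa [hgrad] using hM.add_dotProduct_mulVec_add x (v - x)

theorem PosDef.dotProduct_mulVec_lt_of_mulVec_eq_const {M : Matrix ι ι ℝ} (hM : M.PosDef)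
    {x v : ι → ℝ} {c : ℝ} (hc : M *ᵥ x = fun _ => c) (hv : ∑ i, v i = ∑ i, x i) (hvx : v ≠ x) :
    x ⬝ᵥ M *ᵥ x < v ⬝ᵥ M *ᵥ v := by
  have hsymm : M.IsSymm := by simpa using hM.isHermitian
  rw [hsymm.dotProduct_mulVec_eq_add_of_mulVec_eq_const hc hv, lt_add_iff_pos_right]
  simpa using hM.dotProduct_mulVec_pos (sub_ne_zero.mpr hvx)

theorem PosDef.dotProduct_mulVec_le_of_mulVec_eq_const {M : Matrix ι ι ℝ} (hM : M.PosDef)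
    {x v : ι → ℝ} {c : ℝ} (hc : M *ᵥ x = fun _ => c) (hv : ∑ i, v i = ∑ i, x i) :
    x ⬝ᵥ M *ᵥ x ≤ v ⬝ᵥ M *ᵥ v := by
  rcases eq_or_ne v x with rfl | hvx
  exacts [le_rfl, (hM.dotProduct_mulVec_lt_of_mulVec_eq_const hc hv hvx).le]

theorem eq_inv_mulVec_one_div_sum_of_mulVec_eq_const [DecidableEq ι] {A : Matrix ι ι ℝ}
    (hA : IsUnit A.det) {x : ι → ℝ} {c : ℝ} (hc : A *ᵥ x = fun _ => c) (hx : ∑ i, x i = 1)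
    (i : ι) :
    x i = (A⁻¹ *ᵥ fun _ => 1) i / ∑ j, (A⁻¹ *ᵥ fun _ => 1) j := by
  set u := A⁻¹ *ᵥ fun _ => (1 : ℝ)
  have hxc : x = c • u := by
    calc x = A⁻¹ *ᵥ (A *ᵥ x) := by rw [mulVec_mulVec, nonsing_inv_mul _ hA, one_mulVec]
      _ = c • u := by rw [hc, ← mulVec_smul]; congr with j; simp
  have hsum : c * ∑ j, u j = 1 := by
    rw [hxc] at hx
    simpa [Finset.mul_sum] using hx
  rw [eq_div_iff (right_ne_zero_of_mul_eq_one hsum), hxc, Pi.smul_apply, smul_eq_mul]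
  linear_combination u i * hsum

theorem submatrix_val_mulVec_apply_of_support_subset {M : Matrix ι ι ℝ} {s : Finset ι}
    {w : ι → ℝ} (hw : ∀ i ∉ s, w i = 0) (i : s) :
    (M.submatrix (↑) (↑) *ᵥ fun j : s => w j) i = (M *ᵥ w) i := by
  simp only [mulVec, dotProduct, submatrix_apply]
  exact Finset.sum_coe_sort_eq_sum_univ (f := fun j => M i j * w j) fun j hj => by simp [hw j hj]

end Matrix

/-- For an arbitrary `p × p` symmetric positive definite matrix `S`,
let `w` be the (unique) solution of the long-only minimum variance problem
(minimize `wᵀ S w` subject to `∑ wᵢ = 1`, `wᵢ ≥ 0`).  Let `K = {i : wᵢ > 0}` be the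
active set.  Then the principal submatrix `S^K` is invertible, the restriction of `w`
to `K` is given by `(S^K)⁻¹ 1 / (1ᵀ (S^K)⁻¹ 1)`, it is the unique solution of the
fully-invested (long-short) minimum variance problem on the reduced asset set `K`,
and `w` vanishes outside `K`. -/
theorem lomv_active_submatrix_solution {p : ℕ}
    (S : Matrix (Fin p) (Fin p) ℝ) (hS : S.PosDef)
    (w : Fin p → ℝ)
    (hsum : ∑ i, w i = 1)
    (hnonneg : ∀ i, 0 ≤ w i)
    (hmin : ∀ v : Fin p → ℝ, (∑ i, v i = 1) → (∀ i, 0 ≤ v i) →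
      ∑ i, ∑ j, w i * S i j * w j ≤ ∑ i, ∑ j, v i * S i j * v j)
    (K : Finset (Fin p)) (hK : ∀ i, i ∈ K ↔ 0 < w i) :
    -- the principal submatrix Σ^K is invertible
    IsUnit (S.submatrix (fun i : ↥K => (i : Fin p)) (fun j : ↥K => (j : Fin p))).det
    -- the explicit formula w^K = (Σ^K)⁻¹ 1_k / (1_kᵀ (Σ^K)⁻¹ 1_k)
    ∧ (∀ i : ↥K, w (i : Fin p) =
        ((S.submatrix (fun i : ↥K => (i : Fin p)) (fun j : ↥K => (j : Fin p)))⁻¹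
            *ᵥ (fun _ => (1 : ℝ))) i
          / ∑ j : ↥K,
            ((S.submatrix (fun i : ↥K => (i : Fin p)) (fun j : ↥K => (j : Fin p)))⁻¹
              *ᵥ (fun _ => (1 : ℝ))) j)
    -- w^K is fully invested and minimizes the variance among fully invested
    -- portfolios on the reduced asset set K
    ∧ (∑ i : ↥K, w (i : Fin p) = 1)
    ∧ (∀ v : ↥K → ℝ, (∑ i : ↥K, v i = 1) →
        ∑ i : ↥K, ∑ j : ↥K, w (i : Fin p) * S (i : Fin p) (j : Fin p) * w (j : Fin p)
          ≤ ∑ i : ↥K, ∑ j : ↥K, v i * S (i : Fin p) (j : Fin p) * v j)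
    -- and it is the unique such minimizer
    ∧ (∀ v : ↥K → ℝ, (∑ i : ↥K, v i = 1) →
        (∀ u : ↥K → ℝ, (∑ i : ↥K, u i = 1) →
          ∑ i : ↥K, ∑ j : ↥K, v i * S (i : Fin p) (j : Fin p) * v j
            ≤ ∑ i : ↥K, ∑ j : ↥K, u i * S (i : Fin p) (j : Fin p) * u j) →
        v = fun i : ↥K => w (i : Fin p))
    -- w^L is recovered from w^K by inserting zeros outside K
    ∧ (∀ i, i ∉ K → w i = 0) := by
  set A := S.submatrix (fun i : ↥K => (i : Fin p)) (fun j : ↥K => (j : Fin p))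
  set x : K → ℝ := fun i => w i
  have hzero : ∀ i ∉ K, w i = 0 := fun i hi =>
    le_antisymm (not_lt.mp (mt (hK i).mpr hi)) (hnonneg i)
  have hx_sum : ∑ i, x i = 1 := (Finset.sum_coe_sort_eq_sum_univ hzero).trans hsum
  have hA : A.PosDef := hS.submatrix Subtype.val_injective
  have hSsymm : S.IsSymm := by simpa using hS.isHermitian
  have hlomv : IsMinOn (fun v => v ⬝ᵥ S *ᵥ v) (stdSimplex ℝ (Fin p)) w :=
    isMinOn_iff.mpr fun v hv => by
      simpa only [sum_sum_mul_mul_eq_dotProduct_mulVec] using hmin v hv.2 hv.1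
  obtain ⟨j₀⟩ : Nonempty K := by
    by_contra hK0
    simp [not_nonempty_iff.mp hK0] at hx_sum
  have hc : A *ᵥ x = fun _ => (S *ᵥ w) j₀ := by
    ext i
    rw [submatrix_val_mulVec_apply_of_support_subset hzero]
    exact le_antisymm
      (hSsymm.mulVec_apply_le_of_isMinOn_stdSimplex hlomv ⟨hnonneg, hsum⟩ _ ((hK i).mp i.2))
      (hSsymm.mulVec_apply_le_of_isMinOn_stdSimplex hlomv ⟨hnonneg, hsum⟩ _ ((hK j₀).mp j₀.2))
  have hquad (v : K → ℝ) : ∑ i : K, ∑ j : K, v i * S i j * v j = v ⬝ᵥ A *ᵥ v :=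
    sum_sum_mul_mul_eq_dotProduct_mulVec A v
  have hdet : IsUnit A.det := (isUnit_iff_isUnit_det A).mp hA.isUnit
  refine ⟨hdet, eq_inv_mulVec_one_div_sum_of_mulVec_eq_const hdet hc hx_sum, hx_sum,
    fun v hv => ?_, fun v hv hvmin => ?_, hzero⟩
  · rw [hquad, hquad]
    exact hA.dotProduct_mulVec_le_of_mulVec_eq_const hc (hv.trans hx_sum.symm)
  · by_contra hvx
    have := hvmin x hx_sum
    rw [hquad, hquad] at this
    exact this.not_gt (hA.dotProduct_mulVec_lt_of_mulVec_eq_const hc (hv.trans hx_sum.symm) hvx)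
end

section
/- Let σ² > 0, let β₁ ≤ β₂ ≤ ⋯ ≤ β_p be real numbers arranged in increasing order, and let δ₁², …, δ_p² be positive reals, with Σ_{j=1}^p β_j/δ_j² ≥ 0. Define R₁ = 1/σ² and, for 2 ≤ i ≤ p, R_i = 1/σ² + Σ_{j=1}^{i−1} (β_j/δ_j²)(β_j − β_i). Then there exists s ≤ p such that the sequence {R_i} is monotonically nondecreasing until index s and monotonically nonincreasing for i > s, i.e. 0 < R₁ ≤ R₂ ≤ ⋯ ≤ R_s ≥ R_{s+1} ≥ ⋯ ≥ R_p. In particular, setting ℓ = max{i : R_i > 0}, one has i ≤ ℓ if and only if R_i > 0, and the sequence {R_i} crosses zero at most once. -/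
open Finset

private lemma nat_chain (g : ℕ → ℝ) : ∀ (b a : ℕ), a ≤ b →
    (∀ k, a ≤ k → k < b → g k ≤ g (k + 1)) → g a ≤ g b := by
  intro b
  induction b with
  | zero => intro a ha _; simp [Nat.le_zero.mp ha]
  | succ n ih =>
    intro a ha h
    rcases eq_or_lt_of_le ha with rfl | h'
    · exact le_refl _
    · have han : a ≤ n := Nat.lt_succ_iff.mp h'
      exact le_trans (ih a han (fun k hk1 hk2 => h k hk1 (Nat.lt_succ_of_lt hk2)))
        (h n han (Nat.lt_succ_self n))

/-- With `β₁ ≤ ⋯ ≤ β_p`, `δᵢ² > 0`, `σ² > 0` and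
`∑ βⱼ/δⱼ² ≥ 0`, the sequence `R₁ = 1/σ²`,
`Rᵢ = 1/σ² + ∑_{j<i} (βⱼ/δⱼ²)(βⱼ − βᵢ)` is unimodal:
nondecreasing up to some index `s` and nonincreasing afterwards.
In particular, with `ℓ = max{i : Rᵢ > 0}`, we have `i ≤ ℓ ↔ Rᵢ > 0`
(so `{Rᵢ}` crosses zero at most once). -/
theorem R_unimodal_and_single_crossing {p : ℕ} (hp : 0 < p)
    (σsq : ℝ) (hσ : 0 < σsq)
    (β δsq : Fin p → ℝ) (hδ : ∀ i, 0 < δsq i)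
    (hmono : Monotone β)
    (hsign : 0 ≤ ∑ j, β j / δsq j)
    (R : Fin p → ℝ)
    (hR : ∀ i, R i = 1 / σsq + ∑ j ∈ Finset.Iio i, β j / δsq j * (β j - β i)) :
    -- unimodality: nondecreasing until s, nonincreasing after s
    (∃ s : Fin p,
      (∀ i j : Fin p, i ≤ j → j ≤ s → R i ≤ R j) ∧
      (∀ i j : Fin p, s ≤ i → i ≤ j → R j ≤ R i))
    -- single sign change: R is positive exactly up to the index ℓ
    ∧ (∃ ℓ : Fin p, 0 < R ℓ ∧ ∀ i : Fin p, (0 < R i ↔ i ≤ ℓ)) := by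
  classical
  -- partial sums of β j / δsq j
  set S : Fin p → ℝ := fun i => ∑ k ∈ Iic i, β k / δsq k with hSdef
  -- positivity of S propagates forward
  have hS_pos : ∀ i j : Fin p, i ≤ j → 0 < S i → 0 < S j := by
    intro i j hij hi
    obtain ⟨m, hm, hfm⟩ : ∃ m ∈ Iic i, 0 < β m / δsq m := by
      by_contra h
      push_neg at h
      have : S i ≤ 0 := Finset.sum_nonpos h
      linarith
    have hβm : 0 < β m := by
      by_contra h
      push_neg at h
      have : β m / δsq m ≤ 0 := div_nonpos_of_nonpos_of_nonneg h (le_of_lt (hδ m))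
      linarith
    have hunion : Iic j = Iic i ∪ Ioc i j := by
      ext x
      simp only [Finset.mem_Iic, Finset.mem_union, Finset.mem_Ioc, Fin.le_def, Fin.lt_def]
      omega
    have hdisj : Disjoint (Iic i) (Ioc i j) := by
      rw [Finset.disjoint_left]
      intro x hx hx'
      simp only [Finset.mem_Iic, Fin.le_def] at hx
      simp only [Finset.mem_Ioc, Fin.lt_def, Fin.le_def] at hx'
      omega
    have hSj : S j = S i + ∑ k ∈ Ioc i j, β k / δsq k := by
      rw [hSdef]
      simp only
      rw [hunion, Finset.sum_union hdisj]
    have hnn : 0 ≤ ∑ k ∈ Ioc i j, β k / δsq k := by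
      apply Finset.sum_nonneg
      intro k hk
      simp only [Finset.mem_Ioc] at hk
      have : β m ≤ β k := hmono (le_of_lt (lt_of_le_of_lt (Finset.mem_Iic.mp hm) hk.1))
      exact div_nonneg (le_trans (le_of_lt hβm) this) (le_of_lt (hδ k))
    rw [hSj]
    linarith
  -- step difference formula
  have hstep : ∀ k l : Fin p, (l : ℕ) = (k : ℕ) + 1 →
      R l - R k = (β k - β l) * S k := by
    intro k l hl
    have hIio_l : Iio l = Iic k := by
      ext x
      simp only [Finset.mem_Iio, Finset.mem_Iic, Fin.lt_def, Fin.le_def, hl]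
      omega
    have hIic_k : Iic k = insert k (Iio k) := (Finset.Iio_insert k).symm
    have hk_not : k ∉ Iio k := by simp
    rw [hR l, hR k, hIio_l, hSdef]
    simp only
    rw [hIic_k, Finset.sum_insert hk_not, Finset.sum_insert hk_not]
    have key : ∑ j ∈ Iio k, β j / δsq j * (β j - β l)
        - ∑ j ∈ Iio k, β j / δsq j * (β j - β k)
        = (β k - β l) * ∑ j ∈ Iio k, β j / δsq j := by
      rw [← Finset.sum_sub_distrib, Finset.mul_sum]
      exact Finset.sum_congr rfl (fun x _ => by ring)
    linear_combination key
  -- last index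
  have hp1 : p - 1 < p := Nat.sub_lt hp one_pos
  -- the set of strict-decrease indices
  set D : Finset (Fin p) :=
    Finset.univ.filter (fun i : Fin p => ∃ h : (i : ℕ) + 1 < p, R ⟨(i : ℕ) + 1, h⟩ < R i)
    with hDdef
  set s : Fin p := if hD : D.Nonempty then D.min' hD else ⟨p - 1, hp1⟩ with hsdef
  -- steps before s are nondecreasing
  have step_up : ∀ k : Fin p, ∀ h : (k : ℕ) + 1 < p,
      (k : ℕ) + 1 ≤ (s : ℕ) → R k ≤ R ⟨(k : ℕ) + 1, h⟩ := by
    intro k h hks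
    by_contra hcon
    push_neg at hcon
    have hkD : k ∈ D := by
      rw [hDdef, Finset.mem_filter]
      exact ⟨Finset.mem_univ _, h, hcon⟩
    have hD : D.Nonempty := ⟨k, hkD⟩
    rw [hsdef] at hks
    simp only [dif_pos hD] at hks
    have := D.min'_le k hkD
    rw [Fin.le_def] at this
    omega
  -- steps from s on are nonincreasing
  have step_down : ∀ k : Fin p, ∀ h : (k : ℕ) + 1 < p,
      s ≤ k → R ⟨(k : ℕ) + 1, h⟩ ≤ R k := by
    intro k h hsk
    by_cases hD : D.Nonempty
    · have hsD : s ∈ D := by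
        rw [hsdef]; simp only [dif_pos hD]; exact D.min'_mem hD
      rw [hDdef, Finset.mem_filter] at hsD
      obtain ⟨-, hs1, hsdec⟩ := hsD
      -- from the strict decrease at s, S s > 0
      have hdiff := hstep s ⟨(s : ℕ) + 1, hs1⟩ rfl
      have hβle : β s ≤ β ⟨(s : ℕ) + 1, hs1⟩ := hmono (by rw [Fin.le_def]; simp)
      have hSs : 0 < S s := by
        rcases lt_trichotomy (S s) 0 with h' | h' | h'
        · nlinarith
        · rw [h'] at hdiff; nlinarith
        · exact h'
      have hSk : 0 < S k := hS_pos s k hsk hSs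
      have hβk : β k ≤ β ⟨(k : ℕ) + 1, h⟩ := hmono (by rw [Fin.le_def]; simp)
      have := hstep k ⟨(k : ℕ) + 1, h⟩ rfl
      nlinarith
    · -- s = last index, so there is no step from s on
      exfalso
      rw [hsdef] at hsk
      simp only [dif_neg hD] at hsk
      rw [Fin.le_def] at hsk
      simp only at hsk
      omega
  -- the ℕ-indexed version of R
  set g : ℕ → ℝ := fun n => if h : n < p then R ⟨n, h⟩ else 0 with hgdef
  have hgR : ∀ i : Fin p, g (i : ℕ) = R i := by
    intro i; rw [hgdef]; simp only [dif_pos i.isLt]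
  -- part 1: nondecreasing up to s
  have part1 : ∀ i j : Fin p, i ≤ j → j ≤ s → R i ≤ R j := by
    intro i j hij hjs
    rw [← hgR i, ← hgR j]
    apply nat_chain g (j : ℕ) (i : ℕ) hij
    intro k hk1 hk2
    have hkp : k < p := lt_trans hk2 j.isLt
    have hk1p : k + 1 < p := lt_of_le_of_lt hk2 j.isLt
    rw [hgdef]
    simp only [dif_pos hkp, dif_pos hk1p]
    exact step_up ⟨k, hkp⟩ hk1p (le_trans hk2 hjs)
  have part2 : ∀ i j : Fin p, s ≤ i → i ≤ j → R j ≤ R i := by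
    intro i j hsi hij
    rw [← hgR i, ← hgR j]
    have := nat_chain (fun n => -g n) (j : ℕ) (i : ℕ) hij ?_
    · simpa using this
    intro k hk1 hk2
    have hkp : k < p := lt_trans hk2 j.isLt
    have hk1p : k + 1 < p := lt_of_le_of_lt hk2 j.isLt
    simp only [hgdef, dif_pos hkp, dif_pos hk1p, neg_le_neg_iff]
    exact step_down ⟨k, hkp⟩ hk1p (le_trans hsi hk1)
  refine ⟨⟨s, part1, part2⟩, ?_⟩
  -- positivity part
  have z0 : Fin p := ⟨0, hp⟩
  have hR0 : 0 < R (⟨0, hp⟩ : Fin p) := by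
    rw [hR]
    have : ∑ j ∈ Iio (⟨0, hp⟩ : Fin p), β j / δsq j * (β j - β ⟨0, hp⟩) = 0 := by
      apply Finset.sum_eq_zero
      intro x hx
      exfalso
      rw [Finset.mem_Iio, Fin.lt_def] at hx
      simp only [Fin.val_mk] at hx
      omega
    rw [this]
    have : 0 < 1 / σsq := by positivity
    linarith
  set A : Finset (Fin p) := Finset.univ.filter (fun i => 0 < R i) with hAdef
  have hA : A.Nonempty := ⟨⟨0, hp⟩, by rw [hAdef, Finset.mem_filter]; exact ⟨Finset.mem_univ _, hR0⟩⟩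
  refine ⟨A.max' hA, ?_, ?_⟩
  · exact (Finset.mem_filter.mp (A.max'_mem hA)).2
  · intro i
    constructor
    · intro hi
      exact A.le_max' i (by rw [hAdef, Finset.mem_filter]; exact ⟨Finset.mem_univ _, hi⟩)
    · intro hi
      have hlpos : 0 < R (A.max' hA) :=
        (Finset.mem_filter.mp (A.max'_mem hA)).2
      rcases le_total i s with h | h
      · have : R ⟨0, hp⟩ ≤ R i := part1 ⟨0, hp⟩ i (by rw [Fin.le_def]; simp) h
        linarith
      · have : R (A.max' hA) ≤ R i := part2 i (A.max' hA) h hi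
        linarith
end

section
/- Let Σ = σ²ββᵀ + Δ be a p×p one-factor covariance matrix, where σ² > 0, Δ is diagonal with positive entries δ_i², the betas satisfy β₁ ≤ β₂ ≤ ⋯ ≤ β_p and Σ_{j=1}^p β_j/δ_j² ≥ 0. Define R₁ = 1/σ² and R_i = 1/σ² + Σ_{j=1}^{i−1}(β_j/δ_j²)(β_j − β_i) for 2 ≤ i ≤ p, and set ℓ = max{i : R_i > 0}. Let w^L be the unique solution of the long-only minimum variance problem for Σ, let K = {i : w^L_i > 0} be its active set, and let k = |K|. Then k = ℓ and K = {1, 2, …, ℓ}. -/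
open Matrix Finset

private lemma sum_bsub {p : ℕ} (β δsq : Fin p → ℝ) (s : Finset (Fin p)) (x : ℝ) :
    (∑ j ∈ s, β j * β j / δsq j) - (∑ j ∈ s, β j / δsq j) * x
      = ∑ j ∈ s, β j / δsq j * (β j - x) := by
  rw [Finset.sum_mul, ← Finset.sum_sub_distrib]
  exact Finset.sum_congr rfl fun j _ => by ring

private lemma quadform_eq {p : ℕ} (σsq : ℝ) (β δsq : Fin p → ℝ) (v : Fin p → ℝ) :
    (∑ i, ∑ j, v i * ((σsq • Matrix.vecMulVec β β + Matrix.diagonal δsq) i j) * v j)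
      = σsq * (∑ i, β i * v i) ^ 2 + ∑ i, δsq i * v i ^ 2 := by
  have h1 : ∀ i : Fin p,
      (∑ j, v i * ((σsq • Matrix.vecMulVec β β + Matrix.diagonal δsq) i j) * v j)
        = σsq * (β i * v i) * (∑ j, β j * v j) + δsq i * v i ^ 2 := by
    intro i
    have hterm : ∀ j : Fin p,
        v i * ((σsq • Matrix.vecMulVec β β + Matrix.diagonal δsq) i j) * v j
          = σsq * (β i * v i) * (β j * v j)
            + (if j = i then δsq i * v i ^ 2 else 0) := by
      intro j
      rcases eq_or_ne j i with rfl | hij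
      · simp [Matrix.add_apply, Matrix.smul_apply, Matrix.vecMulVec_apply,
          Matrix.diagonal_apply_eq]
        ring
      · simp [Matrix.add_apply, Matrix.smul_apply, Matrix.vecMulVec_apply,
          Matrix.diagonal_apply_ne' δsq hij, hij]
        ring
    rw [Finset.sum_congr rfl fun j _ => hterm j, Finset.sum_add_distrib,
      Finset.sum_ite_eq' Finset.univ i (fun _ => δsq i * v i ^ 2), ← Finset.mul_sum]
    simp
  rw [Finset.sum_congr rfl fun i _ => h1 i, Finset.sum_add_distrib]
  congr 1
  rw [Finset.sum_congr rfl fun i (_ : i ∈ Finset.univ) =>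
    (by ring : σsq * (β i * v i) * (∑ j, β j * v j)
      = β i * v i * (σsq * (∑ j, β j * v j))), ← Finset.sum_mul]
  ring

set_option maxHeartbeats 2000000 in
/-- **Theorem 1, Part 2.** Under the one-factor model
`Σ = σ² β βᵀ + Δ` with ordered betas, positive idiosyncratic variances and
`∑ βⱼ/δⱼ² ≥ 0`, the active set of the long-only minimum variance portfolio is
`K = {1, …, ℓ}` where `ℓ = max{i : Rᵢ > 0}`; in particular `|K| = ℓ`. -/
theorem lomv_active_set_eq_R_threshold {p : ℕ} (hp : 0 < p)
    (σsq : ℝ) (hσ : 0 < σsq)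
    (β δsq : Fin p → ℝ) (hδ : ∀ i, 0 < δsq i)
    (hmono : Monotone β)
    (hsign : 0 ≤ ∑ j, β j / δsq j)
    (S : Matrix (Fin p) (Fin p) ℝ)
    (hS : S = σsq • Matrix.vecMulVec β β + Matrix.diagonal δsq)
    (R : Fin p → ℝ)
    (hR : ∀ i, R i = 1 / σsq + ∑ j ∈ Finset.Iio i, β j / δsq j * (β j - β i))
    -- w is the (unique) LOMV solution for S
    (w : Fin p → ℝ)
    (hsum : ∑ i, w i = 1)
    (hnonneg : ∀ i, 0 ≤ w i)
    (hmin : ∀ v : Fin p → ℝ, (∑ i, v i = 1) → (∀ i, 0 ≤ v i) →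
      ∑ i, ∑ j, w i * S i j * w j ≤ ∑ i, ∑ j, v i * S i j * v j)
    -- ℓ is the largest index with R ℓ > 0
    (ℓ : Fin p) (hℓpos : 0 < R ℓ) (hℓmax : ∀ i : Fin p, ℓ < i → R i ≤ 0) :
    -- K = {1, 2, …, ℓ}: an asset is active iff its index is at most ℓ
    (∀ i : Fin p, 0 < w i ↔ i ≤ ℓ)
    -- and hence k = |K| = ℓ
    ∧ (Finset.univ.filter fun i : Fin p => 0 < w i).card = (ℓ : ℕ) + 1 := by
  
  subst hS
  set Q := ∑ k, β k * w k with hQdef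
  -- KKT conditions
  have hkkt : ∀ i j : Fin p, 0 < w j →
      σsq * Q * β j + δsq j * w j ≤ σsq * Q * β i + δsq i * w i := by
    intro i j hwj
    rcases eq_or_ne i j with rfl | hij
    · exact le_refl _
    by_contra hA
    push_neg at hA
    set A : ℝ := σsq * Q * (β i - β j) + (δsq i * w i - δsq j * w j) with hAdef
    have hAneg : A < 0 := by rw [hAdef]; linarith
    set B : ℝ := σsq * (β i - β j) ^ 2 + δsq i + δsq j with hBdef
    have hBpos : 0 < B := by
      have := hδ i; have := hδ j
      nlinarith [sq_nonneg (β i - β j)]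
    set t : ℝ := min (w j) (-A / B) with htdef
    have htpos : 0 < t := lt_min hwj (div_pos (neg_pos.mpr hAneg) hBpos)
    have htwj : t ≤ w j := min_le_left _ _
    have htA : t * B ≤ -A := by
      have h2 : t ≤ -A / B := min_le_right _ _
      exact (le_div_iff₀ hBpos).mp h2
    set v : Fin p → ℝ := fun k => w k + (if k = i then t else 0) - (if k = j then t else 0)
      with hvdef
    have hvsum : ∑ k, v k = 1 := by
      simp only [hvdef, Finset.sum_sub_distrib, Finset.sum_add_distrib,
        Finset.sum_ite_eq' Finset.univ, Finset.mem_univ, if_true, hsum]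
      ring
    have hvnn : ∀ k, 0 ≤ v k := by
      intro k
      have hk := hnonneg k
      simp only [hvdef]
      rcases eq_or_ne k i with rfl | hki
      · rw [if_pos rfl, if_neg hij]
        linarith
      rcases eq_or_ne k j with rfl | hkj
      · rw [if_neg hki, if_pos rfl]
        linarith
      · rw [if_neg hki, if_neg hkj]
        linarith
    have hbv : (∑ k, β k * v k) = Q + t * (β i - β j) := by
      simp only [hvdef, mul_sub, mul_add, mul_ite, mul_zero,
        Finset.sum_sub_distrib, Finset.sum_add_distrib,
        Finset.sum_ite_eq' Finset.univ, Finset.mem_univ, if_true]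
      rw [← hQdef]; ring
    have hdv : (∑ k, δsq k * v k ^ 2)
        = (∑ k, δsq k * w k ^ 2)
          + (2 * t * (δsq i * w i) + t ^ 2 * δsq i
            - 2 * t * (δsq j * w j) + t ^ 2 * δsq j) := by
      have hterm : ∀ k : Fin p, δsq k * v k ^ 2
          = δsq k * w k ^ 2
            + ((if k = i then 2 * t * (δsq i * w i) + t ^ 2 * δsq i else 0)
              + (if k = j then - (2 * t * (δsq j * w j)) + t ^ 2 * δsq j else 0)) := by
        intro k
        rcases eq_or_ne k i with rfl | hki
        · simp [hvdef, hij, Ne.symm hij]; ring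
        rcases eq_or_ne k j with rfl | hkj
        · simp [hvdef, hki, Ne.symm hij]; ring
        · simp [hvdef, hki, hkj]
      rw [Finset.sum_congr rfl fun k _ => hterm k, Finset.sum_add_distrib,
        Finset.sum_add_distrib, Finset.sum_ite_eq' Finset.univ,
        Finset.sum_ite_eq' Finset.univ]
      simp; ring
    have hm := hmin v hvsum hvnn
    rw [quadform_eq, quadform_eq, hbv, hdv, ← hQdef] at hm
    nlinarith [hm, htpos, htA, mul_le_mul_of_nonneg_left htA htpos.le]
  -- support nonempty
  have hex : ∃ i, 0 < w i := by
    by_contra h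
    push_neg at h
    have hz : ∀ i, w i = 0 := fun i => le_antisymm (h i) (hnonneg i)
    simp [hz] at hsum
  obtain ⟨i₀, hi₀⟩ := hex
  set lam : ℝ := σsq * Q * β i₀ + δsq i₀ * w i₀ with hlamdef
  have hgK : ∀ i, 0 < w i → σsq * Q * β i + δsq i * w i = lam :=
    fun i h => le_antisymm (hkkt i₀ i h) (hkkt i i₀ hi₀)
  have hgoff : ∀ i, ¬ 0 < w i → lam ≤ σsq * Q * β i := by
    intro i h
    have hwi : w i = 0 := le_antisymm (not_lt.mp h) (hnonneg i)
    have hk := hkkt i i₀ hi₀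
    rw [hwi] at hk
    simpa using hk
  have hlam_eq : lam = σsq * Q ^ 2 + ∑ k, δsq k * w k ^ 2 := by
    have h1 : ∀ k : Fin p, w k * lam = σsq * Q * (β k * w k) + δsq k * w k ^ 2 := by
      intro k
      rcases (hnonneg k).lt_or_eq with h | h
      · rw [← hgK k h]; ring
      · rw [← h]; ring
    calc lam = (∑ k, w k) * lam := by rw [hsum, one_mul]
      _ = ∑ k, w k * lam := by rw [Finset.sum_mul]
      _ = ∑ k, (σsq * Q * (β k * w k) + δsq k * w k ^ 2) :=
          Finset.sum_congr rfl fun k _ => h1 k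
      _ = σsq * Q * (∑ k, β k * w k) + ∑ k, δsq k * w k ^ 2 := by
          rw [Finset.sum_add_distrib, ← Finset.mul_sum]
      _ = σsq * Q ^ 2 + ∑ k, δsq k * w k ^ 2 := by rw [← hQdef]; ring
  have hlam_pos : 0 < lam := by
    have h1 : δsq i₀ * w i₀ ^ 2 ≤ ∑ k, δsq k * w k ^ 2 :=
      Finset.single_le_sum (f := fun k => δsq k * w k ^ 2)
        (fun k _ => mul_nonneg (hδ k).le (sq_nonneg _)) (Finset.mem_univ i₀)
    have h2 : 0 < δsq i₀ * w i₀ ^ 2 := mul_pos (hδ i₀) (pow_pos hi₀ 2)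
    rw [hlam_eq]
    nlinarith [sq_nonneg Q]
  -- support set and the key identity
  set F : Finset (Fin p) := Finset.univ.filter (fun i => 0 < w i) with hFdef
  have hmemF : ∀ i, i ∈ F ↔ 0 < w i := by intro i; simp [hFdef]
  set a : ℝ := ∑ j ∈ F, β j / δsq j with hadef
  set b : ℝ := ∑ j ∈ F, β j * β j / δsq j with hbdef
  have hbnn : 0 ≤ b := Finset.sum_nonneg fun j _ => div_nonneg (mul_self_nonneg _) (hδ j).le
  have h1b : 0 < 1 + σsq * b := by nlinarith
  have hQid : Q * (1 + σsq * b) = lam * a := by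
    have hQF : ∑ k ∈ F, β k * w k = Q := by
      rw [hQdef]
      apply Finset.sum_subset (Finset.subset_univ F)
      intro k _ hk
      have hwk : w k = 0 := le_antisymm (not_lt.mp (by simpa [hmemF] using hk)) (hnonneg k)
      simp [hwk]
    have hstep : ∀ k ∈ F, β k * w k
        = lam * (β k / δsq k) - σsq * Q * (β k * β k / δsq k) := by
      intro k hk
      have hwk : 0 < w k := (hmemF k).mp hk
      have h := hgK k hwk
      have hδk : δsq k ≠ 0 := (hδ k).ne'
      field_simp
      linear_combination β k * h
    have hQ2 : Q = lam * a - σsq * Q * b := by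
      conv_lhs => rw [← hQF, Finset.sum_congr rfl hstep, Finset.sum_sub_distrib,
        ← Finset.mul_sum, ← Finset.mul_sum, ← hadef, ← hbdef]
    linarith [hQ2]
  -- Q ≥ 0
  have hQnn : 0 ≤ Q := by
    by_contra hq
    push_neg at hq
    have haneg : a < 0 := by
      have hQneg : Q * (1 + σsq * b) < 0 := mul_neg_of_neg_of_pos hq h1b
      by_contra ha
      push_neg at ha
      have : 0 ≤ lam * a := mul_nonneg hlam_pos.le ha
      linarith [hQid]
    have hrest : ∑ j ∈ Finset.univ.filter (fun i => ¬ 0 < w i), β j / δsq j ≤ 0 := by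
      apply Finset.sum_nonpos
      intro j hj
      have hj' : ¬ 0 < w j := (Finset.mem_filter.mp hj).2
      have hl := hgoff j hj'
      have hσQ : σsq * Q < 0 := mul_neg_of_pos_of_neg hσ hq
      have hβ : β j < 0 := by
        by_contra hb'
        push_neg at hb'
        have := mul_nonpos_of_nonpos_of_nonneg hσQ.le hb'
        linarith
      have := hδ j
      exact le_of_lt (div_neg_of_neg_of_pos hβ this)
    have hsplit := Finset.sum_filter_add_sum_filter_not Finset.univ
      (fun i => 0 < w i) (fun j => β j / δsq j)
    rw [← hsplit] at hsign
    rw [← hFdef] at hsign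
    linarith [hsign, haneg, hrest]
  -- prefix property
  have hprefix : ∀ i j : Fin p, i ≤ j → 0 < w j → 0 < w i := by
    intro i j hij hwj
    by_contra h
    have h1 := hgoff i h
    have h2 := hgK j hwj
    have h3 : β i ≤ β j := hmono hij
    have h4 : σsq * Q * β i ≤ σsq * Q * β j :=
      mul_le_mul_of_nonneg_left h3 (mul_nonneg hσ.le hQnn)
    have h5 : 0 < δsq j * w j := mul_pos (hδ j) hwj
    linarith
  have hFne : F.Nonempty := ⟨i₀, (hmemF i₀).mpr hi₀⟩
  set m := F.max' hFne with hmdef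
  have hmF : 0 < w m := (hmemF m).mp (F.max'_mem hFne)
  have hK : ∀ i, 0 < w i ↔ i ≤ m := by
    intro i
    constructor
    · intro h; exact F.le_max' i ((hmemF i).mpr h)
    · intro h; exact hprefix i m h hmF
  have hF_eq : F = Finset.Iic m := by
    ext i; rw [hmemF i, hK i, Finset.mem_Iic]
  -- T bounds
  have hqa : a = ∑ j ∈ Finset.Iic m, β j / δsq j := by rw [hadef, hF_eq]
  have hqb : b = ∑ j ∈ Finset.Iic m, β j * β j / δsq j := by rw [hbdef, hF_eq]
  have hTm : 0 < 1 / σsq + b - a * β m := by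
    have h1 : 0 < δsq m * w m := mul_pos (hδ m) hmF
    have h2 : σsq * Q * β m + δsq m * w m = lam := hgK m hmF
    have key2 : (1 + σsq * b) * (δsq m * w m)
        = lam * (1 + σsq * b - σsq * (a * β m)) := by
      linear_combination (1 + σsq * b) * h2 - σsq * β m * hQid
    have hpos : 0 < lam * (1 + σsq * b - σsq * (a * β m)) := key2 ▸ mul_pos h1b h1
    have h3 : 0 < 1 + σsq * b - σsq * (a * β m) := by
      by_contra h
      push_neg at h
      nlinarith [hlam_pos]
    have hT : σsq * (1 / σsq + b - a * β m) = 1 + σsq * b - σsq * (a * β m) := by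
      field_simp
    nlinarith [h3, hσ, hT]
  have hToff : ∀ i : Fin p, m < i → 1 / σsq + b - a * β i ≤ 0 := by
    intro i hi
    have h0 : ¬ 0 < w i := by rw [hK]; exact not_le.mpr hi
    have h1 := hgoff i h0
    have h2 : lam * (1 + σsq * b) ≤ σsq * β i * (lam * a) := by
      calc lam * (1 + σsq * b) ≤ σsq * Q * β i * (1 + σsq * b) :=
            mul_le_mul_of_nonneg_right h1 h1b.le
        _ = σsq * β i * (Q * (1 + σsq * b)) := by ring
        _ = σsq * β i * (lam * a) := by rw [hQid]
    have h3 : 1 + σsq * b ≤ σsq * (β i * a) := by nlinarith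
    have hσinv : σsq * (1 / σsq) = 1 := by field_simp
    nlinarith
  -- R m > 0
  have hsum_iio : ∀ i : Fin p, ∑ j ∈ Finset.Iic m, β j / δsq j * (β j - β i)
      = (∑ j ∈ Finset.Iic m, β j * β j / δsq j)
        - (∑ j ∈ Finset.Iic m, β j / δsq j) * β i :=
    fun i => (sum_bsub β δsq _ _).symm
  have hRm : 0 < R m := by
    rw [hR m]
    have hins : Finset.Iic m = insert m (Finset.Iio m) := (Finset.Iio_insert m).symm
    have hsplit : ∑ j ∈ Finset.Iic m, β j / δsq j * (β j - β m)
        = β m / δsq m * (β m - β m) + ∑ j ∈ Finset.Iio m, β j / δsq j * (β j - β m) := by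
      rw [hins, Finset.sum_insert (by simp)]
    have := hsum_iio m
    rw [← hqa, ← hqb] at this
    have : ∑ j ∈ Finset.Iio m, β j / δsq j * (β j - β m) = b - a * β m := by
      rw [← this, hsplit]; ring
    rw [this]
    linarith [hTm]
  -- R i ≤ 0 for i > m
  have hRoff : ∀ i : Fin p, m < i → R i ≤ 0 := by
    intro i hi
    rw [hR i]
    have hfil : (Finset.Iio i).filter (fun j => j ≤ m) = Finset.Iic m := by
      ext j
      simp only [Finset.mem_filter, Finset.mem_Iio, Finset.mem_Iic]
      exact ⟨fun h => h.2, fun h => ⟨lt_of_le_of_lt h hi, h⟩⟩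
    have hsplit := Finset.sum_filter_add_sum_filter_not (Finset.Iio i)
      (fun j => j ≤ m) (fun j => β j / δsq j * (β j - β i))
    rw [hfil] at hsplit
    have h1 : ∑ j ∈ Finset.Iic m, β j / δsq j * (β j - β i) = b - a * β i := by
      rw [hsum_iio i, ← hqa, ← hqb]
    have h2 : ∑ j ∈ (Finset.Iio i).filter (fun j => ¬ j ≤ m),
        β j / δsq j * (β j - β i) ≤ 0 := by
      apply Finset.sum_nonpos
      intro j hj
      obtain ⟨hji, hjm⟩ := Finset.mem_filter.mp hj
      rw [Finset.mem_Iio] at hji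
      have hjm' : m < j := not_le.mp hjm
      have hh : ¬ 0 < w j := by rw [hK]; exact not_le.mpr hjm'
      have hlb := hgoff j hh
      have hβj : 0 < β j := by nlinarith [mul_nonneg hσ.le hQnn]
      have hle : β j ≤ β i := hmono hji.le
      exact mul_nonpos_of_nonneg_of_nonpos
        (div_nonneg hβj.le (hδ j).le) (by linarith)
    linarith [hToff i hi, h1, h2, hsplit]
  -- m = ℓ
  have hmℓ : m = ℓ := by
    by_contra hne
    rcases lt_or_gt_of_ne hne with h | h
    · exact absurd hℓpos (not_lt.mpr (hRoff ℓ h))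
    · exact absurd hRm (not_lt.mpr (hℓmax m h))
  constructor
  · intro i; rw [hK i, hmℓ]
  · have hfl : F = Finset.Iic ℓ := by rw [hF_eq, hmℓ]
    rw [hfl, Fin.card_Iic]
end

section
/- Under the one-factor model Σ = σ²ββᵀ + Δ with β₁ ≤ ⋯ ≤ β_p, δ_i² > 0, σ² > 0 and Σ_{j=1}^p β_j/δ_j² ≥ 0, let w^L be the LOMV solution with active set K and define B_K = 1/σ² + Σ_{j∈K} β_j²/δ_j² and C_K = Σ_{j∈K} β_j/δ_j². Then for every index i ∈ {1,…,p}: i ∈ K if and only if B_K > β_i C_K. -/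
set_option maxHeartbeats 1000000

open Matrix Finset

private lemma lomv_aux_nonneg (g q c : ℝ) (hc : 0 < c)
    (h : ∀ t : ℝ, 0 < t → t ≤ c → 0 ≤ 2 * t * g + t ^ 2 * q) : 0 ≤ g := by
  by_contra hg
  push_neg at hg
  rcases le_or_gt q 0 with hq | hq
  · have := h c hc le_rfl
    nlinarith
  · have hgq : 0 < -g / q := div_pos (neg_pos.mpr hg) hq
    have htpos : 0 < min c (-g / q) := lt_min hc hgq
    have h1 := h _ htpos (min_le_left _ _)
    have h2 : min c (-g / q) ≤ -g / q := min_le_right _ _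
    have h3 : min c (-g / q) * q ≤ -g := (le_div_iff₀ hq).mp h2
    nlinarith

/-- **Lemma: active-set dichotomy.** Under the one-factor model with
ordered betas, positive idiosyncratic variances and `∑ βⱼ/δⱼ² ≥ 0`, with
`B_K = 1/σ² + ∑_{j∈K} βⱼ²/δⱼ²` and `C_K = ∑_{j∈K} βⱼ/δⱼ²`, an asset `i` belongs to
the active set `K` of the LOMV solution iff `B_K > βᵢ C_K`. -/
theorem lomv_active_iff_BK_gt_beta_CK {p : ℕ} (hp : 0 < p)
    (σsq : ℝ) (hσ : 0 < σsq)
    (β δsq : Fin p → ℝ) (hδ : ∀ i, 0 < δsq i)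
    (hmono : Monotone β)
    (hsign : 0 ≤ ∑ j, β j / δsq j)
    (S : Matrix (Fin p) (Fin p) ℝ)
    (hS : S = σsq • Matrix.vecMulVec β β + Matrix.diagonal δsq)
    -- w is the (unique) LOMV solution for S
    (w : Fin p → ℝ)
    (hsum : ∑ i, w i = 1)
    (hnonneg : ∀ i, 0 ≤ w i)
    (hmin : ∀ v : Fin p → ℝ, (∑ i, v i = 1) → (∀ i, 0 ≤ v i) →
      ∑ i, ∑ j, w i * S i j * w j ≤ ∑ i, ∑ j, v i * S i j * v j)
    -- K is the active set
    (K : Finset (Fin p)) (hK : ∀ i, i ∈ K ↔ 0 < w i)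
    (BK CK : ℝ)
    (hBK : BK = 1 / σsq + ∑ j ∈ K, β j ^ 2 / δsq j)
    (hCK : CK = ∑ j ∈ K, β j / δsq j) :
    ∀ i : Fin p, i ∈ K ↔ β i * CK < BK := by
  subst hS
  -- quadratic form rewrite
  have hquad : ∀ v : Fin p → ℝ,
      ∑ i, ∑ j, v i * ((σsq • Matrix.vecMulVec β β + Matrix.diagonal δsq) i j) * v j
        = σsq * (∑ j, β j * v j) ^ 2 + ∑ j, δsq j * v j ^ 2 := by
    intro v
    have hpt : ∀ i j : Fin p,
        v i * ((σsq • Matrix.vecMulVec β β + Matrix.diagonal δsq) i j) * v j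
          = σsq * ((β i * v i) * (β j * v j)) + (if j = i then δsq i * (v i * v j) else 0) := by
      intro i j
      by_cases h : i = j
      · subst h
        simp [Matrix.vecMulVec_apply, Matrix.diagonal_apply, smul_eq_mul]
        ring
      · simp [Matrix.vecMulVec_apply, Matrix.diagonal_apply, Ne.symm h, h, smul_eq_mul]
        ring
    calc ∑ i, ∑ j, v i * ((σsq • Matrix.vecMulVec β β + Matrix.diagonal δsq) i j) * v j
        = ∑ i, ∑ j, (σsq * ((β i * v i) * (β j * v j))
            + (if j = i then δsq i * (v i * v j) else 0)) := by
          refine Finset.sum_congr rfl fun i _ => Finset.sum_congr rfl fun j _ => hpt i j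
      _ = ∑ i, (σsq * ((β i * v i) * ∑ j, (β j * v j)) + δsq i * (v i * v i)) := by
          refine Finset.sum_congr rfl fun i _ => ?_
          rw [Finset.sum_add_distrib, Finset.sum_ite_eq' univ i (fun j => δsq i * (v i * v j)),
            ← Finset.mul_sum, ← Finset.mul_sum]
          simp
      _ = σsq * (∑ j, β j * v j) ^ 2 + ∑ j, δsq j * v j ^ 2 := by
          rw [Finset.sum_add_distrib, ← Finset.mul_sum, ← Finset.sum_mul]
          congr 1
          · ring
          · refine Finset.sum_congr rfl fun i _ => by ring
  obtain ⟨m, hm⟩ : ∃ x : ℝ, x = ∑ j, β j * w j := ⟨_, rfl⟩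
  -- KKT condition
  have hKKT : ∀ i j : Fin p, 0 < w i →
      σsq * β i * m + δsq i * w i ≤ σsq * β j * m + δsq j * w j := by
    intro i j hwi
    by_cases hij : i = j
    · subst hij; exact le_rfl
    · set d : Fin p → ℝ := fun k => (if k = j then 1 else 0) - (if k = i then 1 else 0) with hd
      have hsumd : ∑ k, d k = 0 := by simp [hd]
      have hbd : ∑ k, β k * d k = β j - β i := by
        simp [hd, mul_sub, Finset.sum_sub_distrib, mul_ite, mul_one, mul_zero]
      have hdd : ∑ k, δsq k * w k * d k = δsq j * w j - δsq i * w i := by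
        simp [hd, mul_sub, Finset.sum_sub_distrib, mul_ite, mul_one, mul_zero]
      have hGnn : 0 ≤ σsq * m * (β j - β i) + (δsq j * w j - δsq i * w i) := by
        refine lomv_aux_nonneg _ (σsq * (β j - β i) ^ 2 + ∑ k, δsq k * d k ^ 2) (w i) hwi ?_
        intro t ht htc
        set v : Fin p → ℝ := fun k => w k + t * d k with hv
        have hv1 : ∑ k, v k = 1 := by
          simp only [hv]
          rw [Finset.sum_add_distrib, ← Finset.mul_sum, hsumd, hsum]
          ring
        have hv2 : ∀ k, 0 ≤ v k := by
          intro k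
          simp only [hv, hd]
          by_cases hki : k = i
          · subst hki
            simp [hij]
            nlinarith [hnonneg k]
          · by_cases hkj : k = j
            · subst hkj
              simp [hki]
              nlinarith [hnonneg k]
            · simp [hki, hkj]
              exact hnonneg k
        have hle := hmin v hv1 hv2
        rw [hquad w, hquad v, ← hm] at hle
        have hβv : ∑ k, β k * v k = m + t * (β j - β i) := by
          simp only [hv, mul_add]
          rw [Finset.sum_add_distrib, ← hm]
          congr 1
          rw [← hbd, Finset.mul_sum]
          refine Finset.sum_congr rfl fun k _ => by ring
        have hδv : ∑ k, δsq k * v k ^ 2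
            = (∑ k, δsq k * w k ^ 2) + 2 * t * (δsq j * w j - δsq i * w i)
              + t ^ 2 * ∑ k, δsq k * d k ^ 2 := by
          have hterm : ∀ k : Fin p, δsq k * v k ^ 2
              = δsq k * w k ^ 2 + 2 * t * (δsq k * w k * d k) + t ^ 2 * (δsq k * d k ^ 2) := by
            intro k; simp only [hv]; ring
          rw [Finset.sum_congr rfl fun k _ => hterm k, Finset.sum_add_distrib,
            Finset.sum_add_distrib, ← Finset.mul_sum, ← Finset.mul_sum, hdd]
        rw [hβv, hδv] at hle
        nlinarith [hle]
      linarith [hGnn]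
  -- pick an active index
  have hex : ∃ i, 0 < w i := by
    by_contra hno
    push_neg at hno
    have hz : ∀ i, w i = 0 := fun i => le_antisymm (hno i) (hnonneg i)
    rw [Finset.sum_congr rfl fun i _ => hz i] at hsum
    simp at hsum
  obtain ⟨i0, hi0⟩ := hex
  obtain ⟨lam, hlam⟩ : ∃ l : ℝ, l = σsq * β i0 * m + δsq i0 * w i0 := ⟨_, rfl⟩
  have hEqK : ∀ i, 0 < w i → σsq * β i * m + δsq i * w i = lam := by
    intro i hi
    rw [hlam]
    exact le_antisymm (hKKT i i0 hi) (hKKT i0 i hi0)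
  have hGe : ∀ j, lam ≤ σsq * β j * m + δsq j * w j := by
    intro j; rw [hlam]; exact hKKT i0 j hi0
  have hwzero : ∀ k, k ∉ K → w k = 0 := by
    intro k hk
    rcases eq_or_lt_of_le (hnonneg k) with h | h
    · exact h.symm
    · exact absurd ((hK k).mpr h) hk
  -- lam is positive
  have hlamval : lam = σsq * m ^ 2 + ∑ k, δsq k * w k ^ 2 := by
    have h1 : ∀ k : Fin p, w k * (σsq * β k * m + δsq k * w k) = lam * w k := by
      intro k
      rcases eq_or_lt_of_le (hnonneg k) with h | h
      · rw [← h]; ring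
      · rw [hEqK k h]; ring
    have h2 : ∑ k, w k * (σsq * β k * m + δsq k * w k) = lam := by
      rw [Finset.sum_congr rfl fun k _ => h1 k, ← Finset.mul_sum, hsum, mul_one]
    rw [← h2]
    have h3 : ∀ k : Fin p, w k * (σsq * β k * m + δsq k * w k)
        = σsq * m * (β k * w k) + δsq k * w k ^ 2 := by
      intro k; ring
    rw [Finset.sum_congr rfl fun k _ => h3 k, Finset.sum_add_distrib, ← Finset.mul_sum, ← hm]
    ring
  have hlampos : 0 < lam := by
    rw [hlamval]
    have h1 : 0 < ∑ k, δsq k * w k ^ 2 :=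
      Finset.sum_pos' (fun k _ => mul_nonneg (hδ k).le (sq_nonneg _))
        ⟨i0, Finset.mem_univ _, mul_pos (hδ i0) (pow_pos hi0 2)⟩
    nlinarith [sq_nonneg m]
  have hBKpos : 0 < BK := by
    rw [hBK]
    have h1 : 0 ≤ ∑ j ∈ K, β j ^ 2 / δsq j :=
      Finset.sum_nonneg fun j _ => div_nonneg (sq_nonneg _) (hδ j).le
    have h2 : 0 < 1 / σsq := by positivity
    linarith
  -- key identity: σ² m B_K = λ C_K
  have hmK : m = ∑ j ∈ K, β j * w j := by
    rw [hm]
    refine (Finset.sum_subset (Finset.subset_univ K) fun k _ hk => ?_).symm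
    rw [hwzero k hk, mul_zero]
  have hkey : σsq * m * BK = lam * CK := by
    have h1 : ∀ j ∈ K, β j * w j = lam * (β j / δsq j) - σsq * m * (β j ^ 2 / δsq j) := by
      intro j hj
      have hwj := (hK j).mp hj
      have heq : σsq * β j * m + δsq j * w j = lam := hEqK j hwj
      have hδj := (hδ j).ne'
      field_simp
      linear_combination β j * heq
    have e0 : ∑ j ∈ K, β j * w j = lam * CK - σsq * m * (BK - 1 / σsq) := by
      rw [Finset.sum_congr rfl h1, Finset.sum_sub_distrib, ← Finset.mul_sum,
        ← Finset.mul_sum, hCK, hBK]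
      ring
    have h2 : m = lam * CK - σsq * m * (BK - 1 / σsq) := hmK.trans e0
    have h3 : σsq * m * (1 / σsq) = m := by field_simp
    linear_combination h2 + h3
  -- conclusion
  intro i
  constructor
  · intro hi
    have hwi := (hK i).mp hi
    have heq : σsq * β i * m + δsq i * w i = lam := hEqK i hwi
    have h1 : σsq * β i * m < lam := by nlinarith [mul_pos (hδ i) hwi]
    have h2 : σsq * β i * m * BK < lam * BK :=
      mul_lt_mul_of_pos_right h1 hBKpos
    have hk2 : lam * (β i * CK) = σsq * β i * m * BK := by
      linear_combination (-β i) * hkey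
    have h3 : lam * (β i * CK) < lam * BK := by rw [hk2]; exact h2
    exact lt_of_mul_lt_mul_left h3 hlampos.le
  · intro hlt
    by_contra hni
    have hw0 : w i = 0 := hwzero i hni
    have hge : lam ≤ σsq * β i * m := by
      have h := hGe i
      rw [hw0] at h
      linarith [h]
    have h2 : lam * BK ≤ σsq * β i * m * BK :=
      mul_le_mul_of_nonneg_right hge hBKpos.le
    have hk2 : lam * (β i * CK) = σsq * β i * m * BK := by
      linear_combination (-β i) * hkey
    have h3 : lam * BK ≤ lam * (β i * CK) := by rw [hk2]; exact h2
    have h4 : BK ≤ β i * CK := le_of_mul_le_mul_left h3 hlampos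
    linarith
end

section
/- Under the one-factor model Σ = σ²ββᵀ + Δ with β₁ ≤ ⋯ ≤ β_p, δ_i² > 0, σ² > 0 and Σ_{j=1}^p β_j/δ_j² ≥ 0, let w^L be the LOMV solution with active set K and k = |K|. Then K = {1, 2, …, k} (the active assets are exactly the k assets with the smallest betas) and C_K = Σ_{j∈K} β_j/δ_j² ≥ 0. -/
open Matrix Finset

set_option maxHeartbeats 2000000

/-- **Lemma.** Under the one-factor model with ordered betas, positive
idiosyncratic variances and `∑ βⱼ/δⱼ² ≥ 0`, the active set of the LOMV solution is
`K = {1, 2, …, k}` where `k = |K|` (the `k` assets with the smallest betas), and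
`C_K = ∑_{j∈K} βⱼ/δⱼ² ≥ 0`. -/
theorem lomv_active_set_is_initial_segment {p : ℕ} (hp : 0 < p)
    (σsq : ℝ) (hσ : 0 < σsq)
    (β δsq : Fin p → ℝ) (hδ : ∀ i, 0 < δsq i)
    (hmono : Monotone β)
    (hsign : 0 ≤ ∑ j, β j / δsq j)
    (S : Matrix (Fin p) (Fin p) ℝ)
    (hS : S = σsq • Matrix.vecMulVec β β + Matrix.diagonal δsq)
    -- w is the (unique) LOMV solution for S
    (w : Fin p → ℝ)
    (hsum : ∑ i, w i = 1)
    (hnonneg : ∀ i, 0 ≤ w i)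
    (hmin : ∀ v : Fin p → ℝ, (∑ i, v i = 1) → (∀ i, 0 ≤ v i) →
      ∑ i, ∑ j, w i * S i j * w j ≤ ∑ i, ∑ j, v i * S i j * v j)
    -- K is the active set
    (K : Finset (Fin p)) (hK : ∀ i, i ∈ K ↔ 0 < w i) :
    -- K consists of the K.card assets with the smallest indices (smallest betas)
    (∀ i : Fin p, i ∈ K ↔ (i : ℕ) < K.card)
    -- and C_K ≥ 0
    ∧ 0 ≤ ∑ j ∈ K, β j / δsq j := by
  -- quadratic form identity
  have hquad : ∀ v : Fin p → ℝ,
      ∑ i, ∑ j, v i * S i j * v j = σsq * (∑ i, β i * v i)^2 + ∑ i, δsq i * (v i)^2 := by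
    intro v
    subst hS
    have h1 : ∀ i j : Fin p, v i * ((σsq • Matrix.vecMulVec β β + Matrix.diagonal δsq) i j) * v j
        = σsq * (β i * v i) * (β j * v j) + v i * (Matrix.diagonal δsq i j) * v j := by
      intro i j
      simp [Matrix.add_apply, Matrix.smul_apply, Matrix.vecMulVec_apply]
      ring
    simp only [h1, Finset.sum_add_distrib]
    congr 1
    · simp only [sq, Finset.sum_mul, Finset.mul_sum]
      refine Finset.sum_congr rfl fun i _ => ?_
      refine Finset.sum_congr rfl fun j _ => ?_
      ring
    · refine Finset.sum_congr rfl fun i _ => ?_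
      rw [Finset.sum_eq_single i]
      · simp [Matrix.diagonal_apply_eq]; ring
      · intro b _ hb; simp [Matrix.diagonal_apply_ne' _ hb]
      · simp
  obtain ⟨m, hm_def⟩ : ∃ m : ℝ, m = ∑ i, β i * w i := ⟨_, rfl⟩
  -- first-order conditions
  have hfoc : ∀ i j : Fin p, 0 < w i →
      σsq * m * β i + δsq i * w i ≤ σsq * m * β j + δsq j * w j := by
    intro i j hwi
    by_cases hij : i = j
    · subst hij; exact le_refl _
    by_contra hlt
    push_neg at hlt
    set d : ℝ := (σsq * m * β i + δsq i * w i) - (σsq * m * β j + δsq j * w j) with hd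
    have hd0 : 0 < d := by simp only [hd]; linarith
    set Q : ℝ := σsq * (β j - β i)^2 + δsq i + δsq j with hQ
    have hQ0 : 0 < Q := by
      have := sq_nonneg (β j - β i)
      have := hδ i; have := hδ j
      nlinarith
    set ε : ℝ := min (w i) (d / Q) with hε
    have hε0 : 0 < ε := lt_min hwi (div_pos hd0 hQ0)
    have hεwi : ε ≤ w i := min_le_left _ _
    have hεQ : ε * Q ≤ d := by
      have h := min_le_right (w i) (d / Q)
      calc ε * Q ≤ (d / Q) * Q := by nlinarith
        _ = d := by field_simp
    set v : Fin p → ℝ := fun t => w t + (if t = j then ε else 0) - (if t = i then ε else 0) with hv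
    have hvsum : ∑ t, v t = 1 := by
      simp only [hv, Finset.sum_sub_distrib, Finset.sum_add_distrib,
        Finset.sum_ite_eq' Finset.univ, Finset.mem_univ, if_true, hsum]
      ring
    have hvnn : ∀ t, 0 ≤ v t := by
      intro t
      have h0 := hnonneg t
      simp only [hv]
      split_ifs with h1 h2 h3
      · linarith
      · linarith
      · subst h3; linarith
      · linarith
    have hle := hmin v hvsum hvnn
    rw [hquad w, hquad v] at hle
    have hβv : ∑ t, β t * v t = m + ε * (β j - β i) := by
      have hpt : ∀ t, β t * v t
          = β t * w t + (if t = j then ε * β j else 0) - (if t = i then ε * β i else 0) := by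
        intro t
        by_cases h1 : t = j
        · subst h1
          have h2 : t ≠ i := fun h => hij (h ▸ rfl)
          simp [hv, h2]; ring
        · by_cases h2 : t = i
          · subst h2; simp [hv, h1]; ring
          · simp [hv, h1, h2]
      simp only [hpt, Finset.sum_sub_distrib, Finset.sum_add_distrib,
        Finset.sum_ite_eq' Finset.univ, Finset.mem_univ, if_true, hm_def]
      ring
    have hδv : ∑ t, δsq t * (v t)^2 = (∑ t, δsq t * (w t)^2)
        + (2*ε*(δsq j * w j) + ε^2 * δsq j) + (ε^2 * δsq i - 2*ε*(δsq i * w i)) := by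
      have hpt : ∀ t, δsq t * (v t)^2 = δsq t * (w t)^2
          + (if t = j then 2*ε*(δsq j * w j) + ε^2 * δsq j else 0)
          + (if t = i then ε^2 * δsq i - 2*ε*(δsq i * w i) else 0) := by
        intro t
        by_cases h1 : t = j
        · subst h1
          have h2 : t ≠ i := fun h => hij (h ▸ rfl)
          simp [hv, h2]; ring
        · by_cases h2 : t = i
          · subst h2; simp [hv, h1]; ring
          · simp [hv, h1, h2]
      simp only [hpt, Finset.sum_add_distrib,
        Finset.sum_ite_eq' Finset.univ, Finset.mem_univ, if_true]
    rw [hβv, hδv, ← hm_def] at hle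
    -- derive contradiction
    have key : 0 ≤ 2 * ε * (-d) + ε^2 * Q := by nlinarith
    nlinarith [mul_pos hε0 hd0, mul_le_mul_of_nonneg_left hεQ hε0.le]
  -- some active index
  obtain ⟨i0, hi0⟩ : ∃ i, 0 < w i := by
    by_contra h
    push_neg at h
    have hz : ∀ i ∈ Finset.univ, w i = 0 := fun i _ => le_antisymm (h i) (hnonneg i)
    rw [Finset.sum_eq_zero hz] at hsum
    norm_num at hsum
  obtain ⟨lam, hlam⟩ : ∃ l : ℝ, l = σsq * m * β i0 + δsq i0 * w i0 := ⟨_, rfl⟩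
  have hgK : ∀ i, 0 < w i → σsq * m * β i + δsq i * w i = lam := by
    intro i hi
    rw [hlam]
    exact le_antisymm (hfoc i i0 hi) (hfoc i0 i hi0)
  have hglb : ∀ j, lam ≤ σsq * m * β j + δsq j * w j := by
    intro j
    rw [hlam]
    exact hfoc i0 j hi0
  have hlam_eq : lam = σsq * m^2 + ∑ t, δsq t * (w t)^2 := by
    have h1 : ∑ t, w t * (σsq * m * β t + δsq t * w t) = lam := by
      have h2 : ∀ t ∈ Finset.univ, w t * (σsq * m * β t + δsq t * w t) = w t * lam := by
        intro t _
        rcases eq_or_lt_of_le (hnonneg t) with h'|h'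
        · rw [← h']; ring
        · rw [hgK t h']
      rw [Finset.sum_congr rfl h2, ← Finset.sum_mul, hsum, one_mul]
    rw [← h1]
    calc ∑ t, w t * (σsq * m * β t + δsq t * w t)
        = σsq * m * (∑ t, β t * w t) + ∑ t, δsq t * (w t)^2 := by
          rw [Finset.mul_sum, ← Finset.sum_add_distrib]
          exact Finset.sum_congr rfl fun t _ => by ring
      _ = σsq * m^2 + ∑ t, δsq t * (w t)^2 := by rw [← hm_def]; ring
  have hlampos : 0 < lam := by
    rw [hlam_eq]
    have h2 : δsq i0 * (w i0)^2 ≤ ∑ t, δsq t * (w t)^2 :=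
      Finset.single_le_sum (fun t _ => mul_nonneg (hδ t).le (sq_nonneg _)) (Finset.mem_univ i0)
    nlinarith [sq_nonneg m, mul_pos (hδ i0) (pow_pos hi0 2)]
  have hw0 : ∀ j, j ∉ K → w j = 0 := by
    intro j hj
    have h' : ¬ 0 < w j := fun h => hj ((hK j).mpr h)
    linarith [hnonneg j, not_lt.mp h']
  have hmK : ∑ j ∈ K, β j * w j = m := by
    rw [hm_def]
    exact Finset.sum_subset K.subset_univ (fun x _ hx => by rw [hw0 x hx, mul_zero])
  have hC : 0 ≤ ∑ j ∈ K, β j ^ 2 / δsq j :=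
    Finset.sum_nonneg fun j _ => div_nonneg (sq_nonneg _) (hδ j).le
  have hBid : lam * (∑ j ∈ K, β j / δsq j)
      = m * (1 + σsq * ∑ j ∈ K, β j ^ 2 / δsq j) := by
    have h1 : ∀ j ∈ K, lam * (β j / δsq j) = σsq * m * (β j ^ 2 / δsq j) + β j * w j := by
      intro j hj
      have hwj : 0 < w j := (hK j).mp hj
      rw [← hgK j hwj]
      have hδj := (hδ j).ne'
      field_simp
    rw [Finset.mul_sum, Finset.sum_congr rfl h1, Finset.sum_add_distrib, ← Finset.mul_sum, hmK]
    ring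
  have hm0 : 0 ≤ m := by
    by_contra hmneg
    push_neg at hmneg
    have hin : ∀ j, j ∉ K → β j / δsq j ≤ 0 := by
      intro j hj
      have h1 := hglb j
      rw [hw0 j hj, mul_zero, add_zero] at h1
      have hβneg : β j ≤ 0 := by
        by_contra hb
        push_neg at hb
        nlinarith [mul_pos (mul_pos hσ (neg_pos.mpr hmneg)) hb]
      exact div_nonpos_of_nonpos_of_nonneg hβneg (hδ j).le
    have hBneg : (∑ j ∈ K, β j / δsq j) < 0 := by
      have hpos : (0:ℝ) < 1 + σsq * ∑ j ∈ K, β j ^ 2 / δsq j := by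
        nlinarith [mul_nonneg hσ.le hC]
      have h3 : lam * (∑ j ∈ K, β j / δsq j) < 0 := by
        rw [hBid]
        nlinarith [mul_pos (neg_pos.mpr hmneg) hpos]
      by_contra hb
      push_neg at hb
      nlinarith [mul_nonneg hlampos.le hb]
    have hsplit := Finset.sum_add_sum_compl K (fun j => β j / δsq j)
    have hcomp : ∑ j ∈ Kᶜ, β j / δsq j ≤ 0 :=
      Finset.sum_nonpos (fun j hj => hin j (Finset.mem_compl.mp hj))
    linarith
  have hB : 0 ≤ ∑ j ∈ K, β j / δsq j := by
    have h4 : 0 ≤ m * (1 + σsq * ∑ j ∈ K, β j ^ 2 / δsq j) :=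
      mul_nonneg hm0 (by nlinarith [mul_nonneg hσ.le hC])
    by_contra hb
    push_neg at hb
    nlinarith [mul_pos hlampos (neg_pos.mpr hb)]
  have hdc : ∀ i j : Fin p, i ≤ j → j ∈ K → i ∈ K := by
    intro i j hij hjK
    by_contra hiK
    have hwi : w i = 0 := hw0 i hiK
    have hwj : 0 < w j := (hK j).mp hjK
    have h1 := hfoc j i hwj
    rw [hwi, mul_zero, add_zero] at h1
    have hββ : β i ≤ β j := hmono hij
    nlinarith [mul_pos (hδ j) hwj, mul_nonneg (mul_nonneg hσ.le hm0) (sub_nonneg.mpr hββ)]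
  refine ⟨fun i => ⟨?_, ?_⟩, hB⟩
  · intro hiK
    have hsub : Finset.Iic i ⊆ K := fun j hj => hdc j i (Finset.mem_Iic.mp hj) hiK
    have hc := Finset.card_le_card hsub
    rw [Fin.card_Iic] at hc
    omega
  · intro hcard
    by_contra hiK
    have hsub : K ⊆ Finset.Iio i := by
      intro j hj
      rw [Finset.mem_Iio]
      by_contra h
      push_neg at h
      exact hiK (hdc i j h hj)
    have hc := Finset.card_le_card hsub
    rw [Fin.card_Iio] at hc
    omega
end

section
/- Let μ be a Borel probability measure on ℝ with cumulative distribution function F, finite first moment ∫|x| dμ(x) < ∞, and finite negative-tail second moment ∫ x²·1_{x≤0} dμ(x) < ∞. Define G(y) = ∫_{(-∞, y]} (x² − yx) dμ(x) for y ≥ 0. Then G is continuous on [0, ∞). -/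
open MeasureTheory Set Filter Topology

/-- Let `μ` be a Borel probability measure on `ℝ` with finite first
moment and finite negative-tail second moment.  Then the population function
`G(y) = ∫_{(-∞,y]} (x² − yx) dμ(x)` is continuous on `[0, ∞)`. -/
theorem G_continuousOn_Ici (μ : Measure ℝ) [IsProbabilityMeasure μ]
    (hmom1 : Integrable (fun x : ℝ => x) μ)
    (hmom2 : IntegrableOn (fun x : ℝ => x ^ 2) (Set.Iic 0) μ)
    (G : ℝ → ℝ)
    (hG : ∀ y, G y = ∫ x in Set.Iic y, (x ^ 2 - y * x) ∂μ) :
    ContinuousOn G (Set.Ici 0) := by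
  have hGeq : G = fun y => ∫ x, (Set.Iic y).indicator (fun x => x ^ 2 - y * x) x ∂μ := by
    funext y
    rw [hG y, ← integral_indicator measurableSet_Iic]
  suffices h : Continuous G from h.continuousOn
  rw [hGeq, continuous_iff_continuousAt]
  intro y₀
  apply continuousAt_of_dominated
    (bound := fun x => (Set.Iic (0:ℝ)).indicator (fun x => x ^ 2) x + (|y₀| + 1) * |x|)
  · filter_upwards with y
    exact ((continuous_pow 2).sub (continuous_const.mul continuous_id)).aestronglyMeasurable.indicator
      measurableSet_Iic
  · filter_upwards [Metric.ball_mem_nhds y₀ one_pos] with y hy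
    filter_upwards with x
    rw [Real.norm_eq_abs]
    have hyb : |y| ≤ |y₀| + 1 := by
      have h1 := abs_sub_abs_le_abs_sub y y₀
      have h2 : |y - y₀| < 1 := by rwa [Metric.mem_ball, Real.dist_eq] at hy
      linarith
    have hind : (0:ℝ) ≤ (Set.Iic (0:ℝ)).indicator (fun x => x ^ 2) x :=
      Set.indicator_nonneg (fun a _ => sq_nonneg a) x
    by_cases hx : x ≤ y
    · rw [Set.indicator_of_mem (by exact hx)]
      by_cases hx0 : x ≤ 0
      · rw [Set.indicator_of_mem (by exact hx0)]
        have hb : |x ^ 2 - y * x| ≤ x ^ 2 + |y| * |x| := by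
          calc |x ^ 2 - y * x| ≤ |x ^ 2| + |y * x| := abs_sub _ _
          _ = x ^ 2 + |y| * |x| := by rw [abs_of_nonneg (sq_nonneg x), abs_mul]
        nlinarith [abs_nonneg x]
      · push_neg at hx0
        rw [Set.indicator_of_notMem (by simpa using hx0)]
        have h1 : x ^ 2 - y * x ≤ 0 := by nlinarith
        rw [abs_of_nonpos h1]
        have h2 : y * x ≤ |y| * |x| := by
          calc y * x ≤ |y * x| := le_abs_self _
          _ = |y| * |x| := abs_mul _ _
        nlinarith [abs_nonneg x]
    · rw [Set.indicator_of_notMem (by simpa using hx)]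
      simp only [abs_zero]
      positivity
  · exact Integrable.add ((integrable_indicator_iff measurableSet_Iic).2 hmom2)
      (hmom1.abs.const_mul _)
  · filter_upwards with x
    by_cases hx : x = y₀
    · subst hx
      have hval : (Set.Iic x).indicator (fun t => t ^ 2 - x * t) x = 0 := by
        rw [Set.indicator_of_mem Set.self_mem_Iic]; ring
      rw [ContinuousAt, hval]
      have hten : Tendsto (fun y => |x ^ 2 - y * x|) (𝓝 x) (𝓝 0) := by
        have : Tendsto (fun y : ℝ => x ^ 2 - y * x) (𝓝 x) (𝓝 (x ^ 2 - x * x)) := by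
          exact (tendsto_const_nhds.sub (tendsto_id.mul tendsto_const_nhds))
        have h0 : x ^ 2 - x * x = 0 := by ring
        rw [h0] at this
        simpa using this.abs
      refine squeeze_zero_norm (fun y => ?_) hten
      calc ‖(Set.Iic y).indicator (fun t => t ^ 2 - y * t) x‖
          ≤ ‖x ^ 2 - y * x‖ := norm_indicator_le_norm_self _ _
        _ = |x ^ 2 - y * x| := Real.norm_eq_abs _
    · rcases lt_or_gt_of_ne hx with hlt | hgt
      · -- x < y₀ : eventually indicator = x² - y x
        have hev : (fun y => (Set.Iic y).indicator (fun t => t ^ 2 - y * t) x)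
            =ᶠ[𝓝 y₀] (fun y => x ^ 2 - y * x) := by
          filter_upwards [eventually_gt_nhds hlt] with y hy
          rw [Set.indicator_of_mem (show x ∈ Set.Iic y from hy.le)]
        have hc : ContinuousAt (fun y : ℝ => x ^ 2 - y * x) y₀ :=
          (continuousAt_const.sub (continuousAt_id.mul continuousAt_const))
        exact hc.congr hev.symm
      · have hev : ∀ᶠ y in 𝓝 y₀, (Set.Iic y).indicator (fun t => t ^ 2 - y * t) x
            = 0 := by
          filter_upwards [eventually_lt_nhds hgt] with y hy
          rw [Set.indicator_of_notMem (by simpa using hy)]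
        exact continuousAt_const.congr (Filter.EventuallyEq.symm hev)
end

section
/- Let μ be a Borel probability measure on ℝ with cdf F, finite first moment, finite negative-tail second moment ∫ x²·1_{x≤0} dμ(x) < ∞, and define G(y) = ∫_{(-∞, y]} (x² − yx) dμ(x) for y ≥ 0. Then G is concave on [0, ∞). Moreover, if μ((−∞,0)) > 0 and ∫ x dμ(x) > 0, then G(0) > 0, G(y)/y → −∫ x dμ(x) < 0 as y → ∞ (so G(y) → −∞), and G has a unique zero β* > 0 on [0, ∞), with G(y) > 0 for 0 ≤ y < β* and G(y) < 0 for y > β*. -/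
open MeasureTheory Set Filter Topology

/-!
For each fixed `x`, the integrand `y ↦ 1_{x ≤ y} (x² − y x)` is concave on `[0, ∞)`: it is affine
in `y` when `x < 0`, and equals `min 0 (x² − y x)` when `x ≥ 0`. Integrating gives concavity of `G`.
`G 0 = ∫_{x ≤ 0} x² dμ` is positive as soon as `μ` charges `(−∞, 0)`, and dominated convergence
gives `G y / y → −E[β] < 0`. A concave function on `[0, ∞)` that is positive at `0` and eventually
negative has exactly one zero in `(0, ∞)`.
-/

theorem integrableOn_Iic_of_integrableOn_Iic {μ : Measure ℝ} [IsLocallyFiniteMeasure μ]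
    {f : ℝ → ℝ} (hf : Continuous f) {a : ℝ} (ha : IntegrableOn f (Iic a) μ) (b : ℝ) :
    IntegrableOn f (Iic b) μ :=
  (ha.union (hf.integrableOn_Icc (a := a) (b := b))).mono_set fun x hx => by
    rcases le_total x a with h | h
    exacts [Or.inl h, Or.inr ⟨h, hx⟩]

theorem tendsto_atBot_of_tendsto_div_self {f : ℝ → ℝ} {c : ℝ} (hc : c < 0)
    (h : Tendsto (fun y => f y / y) atTop (𝓝 c)) : Tendsto f atTop atBot :=
  (h.neg_mul_atTop hc tendsto_id).congr' <| by
    filter_upwards [eventually_gt_atTop 0] with y hy using div_mul_cancel₀ (f y) hy.ne'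

namespace ConcaveOn

variable {f : ℝ → ℝ} {s : Set ℝ} {a y z : ℝ}

theorem pos_of_mem_Ico_of_eq_zero (hf : ConcaveOn ℝ s f) (ha : a ∈ s) (hz : z ∈ s)
    (hfa : 0 < f a) (hfz : f z = 0) (hy : y ∈ Ico a z) : 0 < f y := by
  by_contra! hfy
  have := hf.left_le_of_le_right'' ha hz hy.1 hy.2 (hfz ▸ hfy)
  linarith

theorem neg_of_lt_of_eq_zero (hf : ConcaveOn ℝ s f) (ha : a ∈ s) (hy : y ∈ s)
    (hfa : 0 < f a) (hfz : f z = 0) (haz : a < z) (hzy : z < y) : f y < 0 :=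
  hfz ▸ hf.left_lt_of_lt_right hy ha
    (openSegment_symm ℝ a y ▸ Ioo_subset_openSegment ⟨haz, hzy⟩) (hfz ▸ hfa)

theorem exists_zero_of_pos_of_neg {b : ℝ} (hf : ConcaveOn ℝ (Ici a) f) (hfa : 0 < f a)
    (hab : a < b) (hfb : f b < 0) : ∃ z ∈ Ioo a b, f z = 0 := by
  -- `t` is chosen so that the chord value `(1 - t) f a + t f b` equals `f a / 2`.
  have hd : 0 < f a - f b := by linarith
  set t := f a / (2 * (f a - f b))
  have ht₀ : 0 < t := by positivity
  have ht₁ : t < 1 := by rw [div_lt_one (by linarith)]; linarith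
  set c := (1 - t) * a + t * b
  have hac : a < c := by nlinarith
  have hcb : c < b := by nlinarith
  have hfc : 0 < f c := by
    have hchord := hf.2 (mem_Ici.2 le_rfl) (mem_Ici.2 hab.le) (by linarith : 0 ≤ 1 - t) ht₀.le
      (by ring)
    have : t * (f a - f b) = f a / 2 := by
      simp only [t]
      field_simp [hd.ne']
    simp only [smul_eq_mul] at hchord
    linarith
  have hcont : ContinuousOn f (Icc c b) :=
    ((hf.subset Ioi_subset_Ici_self (convex_Ioi a)).continuousOn isOpen_Ioi).mono
      fun x hx => hac.trans_le hx.1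
  obtain ⟨z, hz, hfz⟩ := intermediate_value_Ioo' hcb.le hcont ⟨hfb, hfc⟩
  exact ⟨z, ⟨hac.trans hz.1, hz.2⟩, hfz⟩

end ConcaveOn

noncomputable def populationFun (μ : Measure ℝ) (y : ℝ) : ℝ :=
  ∫ x in Iic y, (x ^ 2 - y * x) ∂μ

theorem populationFun_eq_integral_indicator (μ : Measure ℝ) (y : ℝ) :
    populationFun μ y = ∫ x, (Iic y).indicator (fun x => x ^ 2 - y * x) x ∂μ :=
  (integral_indicator measurableSet_Iic).symm

theorem concaveOn_indicator_Iic_sq_sub_mul (x : ℝ) :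
    ConcaveOn ℝ (Ici 0) fun y : ℝ => (Iic y).indicator (fun x => x ^ 2 - y * x) x := by
  have haffine : ConcaveOn ℝ (Ici 0) fun y : ℝ => x ^ 2 - y * x :=
    (concaveOn_const _ (convex_Ici 0)).sub ((LinearMap.mulRight ℝ x).convexOn (convex_Ici 0))
  rcases lt_or_ge x 0 with hx | hx
  · refine haffine.congr fun y hy => ?_
    rw [indicator_of_mem (mem_Iic.2 (hx.le.trans hy))]
  · refine ((concaveOn_const 0 (convex_Ici 0)).inf haffine).congr fun y _ => ?_
    show min 0 (x ^ 2 - y * x) = _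
    rcases le_or_gt x y with hxy | hxy
    · rw [indicator_of_mem (mem_Iic.2 hxy)]
      exact min_eq_right (by nlinarith)
    · rw [indicator_of_notMem (notMem_Iic.2 hxy)]
      exact min_eq_left (by nlinarith)

theorem abs_sq_div_sub_le {x y : ℝ} (hy : 1 ≤ y) (hxy : x ≤ y) :
    |x ^ 2 / y - x| ≤ (Iic 0).indicator (fun x => x ^ 2) x + |x| := by
  have hq : 0 ≤ x ^ 2 / y := by positivity
  rcases le_or_gt x 0 with hx | hx
  · rw [indicator_of_mem (mem_Iic.2 hx), abs_of_nonpos hx]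
    have : x ^ 2 / y ≤ x ^ 2 := div_le_self (sq_nonneg x) hy
    rw [abs_le]
    constructor <;> linarith
  · rw [indicator_of_notMem (notMem_Iic.2 hx), abs_of_pos hx, zero_add]
    have : x ^ 2 / y ≤ x := by rw [div_le_iff₀ (by linarith)]; nlinarith
    rw [abs_le]
    constructor <;> linarith

section

variable (μ : Measure ℝ)

theorem concaveOn_populationFun [IsFiniteMeasure μ] (hmom1 : Integrable (fun x : ℝ => x) μ)
    (hmom2 : IntegrableOn (fun x : ℝ => x ^ 2) (Iic 0) μ) :
    ConcaveOn ℝ (Ici 0) (populationFun μ) := by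
  have hint (y : ℝ) : IntegrableOn (fun x => x ^ 2 - y * x) (Iic y) μ :=
    (integrableOn_Iic_of_integrableOn_Iic (continuous_pow 2) hmom2 y).sub
      (hmom1.const_mul y).integrableOn
  simp only [funext (populationFun_eq_integral_indicator μ)]
  exact integral_concaveOn_of_integrand_ae (convex_Ici 0)
    (ae_of_all _ concaveOn_indicator_Iic_sq_sub_mul)
    fun y _ => (integrable_indicator_iff measurableSet_Iic).2 (hint y)

theorem populationFun_zero_pos (hmom2 : IntegrableOn (fun x : ℝ => x ^ 2) (Iic 0) μ)
    (hneg : 0 < μ (Iio 0)) : 0 < populationFun μ 0 := by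
  have h0 : populationFun μ 0 = ∫ x in Iic 0, x ^ 2 ∂μ := by simp [populationFun]
  rw [h0, setIntegral_pos_iff_support_of_nonneg_ae (ae_of_all _ fun x => sq_nonneg x) hmom2]
  exact hneg.trans_le
    (measure_mono fun x hx => ⟨pow_ne_zero 2 (ne_of_lt hx), mem_Iic.2 (le_of_lt hx)⟩)

theorem tendsto_populationFun_div_atTop (hmom1 : Integrable (fun x : ℝ => x) μ)
    (hmom2 : IntegrableOn (fun x : ℝ => x ^ 2) (Iic 0) μ) :
    Tendsto (fun y => populationFun μ y / y) atTop (𝓝 (-∫ x, x ∂μ)) := by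
  have heq : (fun y => ∫ x, (Iic y).indicator (fun x => x ^ 2 / y - x) x ∂μ)
      =ᶠ[atTop] fun y => populationFun μ y / y := by
    filter_upwards [eventually_gt_atTop 0] with y hy
    rw [integral_indicator measurableSet_Iic, populationFun, ← integral_div]
    congr 1 with x
    field_simp
  rw [← integral_neg]
  refine (tendsto_integral_filter_of_dominated_convergence
    (fun x => (Iic 0).indicator (fun x => x ^ 2) x + |x|) ?_ ?_ ?_ ?_).congr' heq
  · exact Eventually.of_forall fun y => ((((continuous_pow 2).div_const y).sub
      continuous_id).measurable.indicator measurableSet_Iic).aestronglyMeasurable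
  · filter_upwards [eventually_ge_atTop 1] with y hy
    refine Eventually.of_forall fun x => ?_
    by_cases hxy : x ≤ y
    · rw [indicator_of_mem (mem_Iic.2 hxy), Real.norm_eq_abs]
      exact abs_sq_div_sub_le hy hxy
    · rw [indicator_of_notMem (notMem_Iic.2 (not_le.1 hxy)), norm_zero]
      exact add_nonneg (indicator_nonneg (fun x _ => sq_nonneg x) x) (abs_nonneg x)
  · exact ((integrable_indicator_iff measurableSet_Iic).2 hmom2).add hmom1.abs
  · refine Eventually.of_forall fun x => ?_
    have hlim : Tendsto (fun y : ℝ => x ^ 2 / y - x) atTop (𝓝 (0 - x)) :=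
      (tendsto_const_nhds.div_atTop tendsto_id).sub_const x
    rw [zero_sub] at hlim
    refine hlim.congr' ?_
    filter_upwards [eventually_ge_atTop x] with y hy
    exact (indicator_of_mem (mem_Iic.2 hy) _).symm

end

/-- Let `μ` be a Borel probability measure on `ℝ` with finite first
moment and finite negative-tail second moment, and let
`G(y) = ∫_{(-∞,y]} (x² − yx) dμ(x)`.  Then `G` is concave on `[0,∞)`.  Moreover, if
`μ((−∞,0)) > 0` and `∫ x dμ > 0`, then `G(0) > 0`, `G(y)/y → −∫ x dμ < 0` as
`y → ∞` (so `G(y) → −∞`), and `G` has a unique zero `β* > 0` on `[0,∞)`, with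
`G > 0` on `[0, β*)` and `G < 0` on `(β*, ∞)`. -/
theorem G_concave_and_unique_zero (μ : Measure ℝ) [IsProbabilityMeasure μ]
    (hmom1 : Integrable (fun x : ℝ => x) μ)
    (hmom2 : IntegrableOn (fun x : ℝ => x ^ 2) (Set.Iic 0) μ)
    (G : ℝ → ℝ)
    (hG : ∀ y, G y = ∫ x in Set.Iic y, (x ^ 2 - y * x) ∂μ) :
    ConcaveOn ℝ (Set.Ici 0) G
    ∧ (0 < μ (Set.Iio 0) → 0 < ∫ x, x ∂μ →
        (0 < G 0
        ∧ Tendsto (fun y => G y / y) atTop (nhds (-∫ x, x ∂μ))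
        ∧ Tendsto G atTop atBot
        ∧ ∃ bstar : ℝ, 0 < bstar ∧ G bstar = 0
            ∧ (∀ y, 0 ≤ y → y < bstar → 0 < G y)
            ∧ (∀ y, bstar < y → G y < 0))) := by
  obtain rfl : G = populationFun μ := funext hG
  have hconc := concaveOn_populationFun μ hmom1 hmom2
  refine ⟨hconc, fun hneg hmean => ?_⟩
  have hG0 := populationFun_zero_pos μ hmom2 hneg
  have hdiv := tendsto_populationFun_div_atTop μ hmom1 hmom2
  have hbot := tendsto_atBot_of_tendsto_div_self (neg_lt_zero.2 hmean) hdiv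
  obtain ⟨b, hGb, hb⟩ := ((hbot.eventually_lt_atBot 0).and (eventually_gt_atTop 0)).exists
  obtain ⟨z, hz, hGz⟩ := hconc.exists_zero_of_pos_of_neg hG0 hb hGb
  refine ⟨hG0, hdiv, hbot, z, hz.1, hGz, fun y hy hyz => ?_, fun y hzy => ?_⟩
  · exact hconc.pos_of_mem_Ico_of_eq_zero self_mem_Ici hz.1.le hG0 hGz ⟨hy, hyz⟩
  · exact hconc.neg_of_lt_of_eq_zero self_mem_Ici (hz.1.trans hzy).le hG0 hGz hz.1 hzy
end

section
/- Let μ be a Borel probability measure on ℝ with cdf F, finite first moment, and finite negative-tail second moment, such that μ((−∞,0)) > 0 and ∫ x dμ(x) = 0. Define G(y) = ∫_{(-∞, y]} (x² − yx) dμ(x) for y ≥ 0. Then G is nondecreasing on [0, ∞), G(0) = ∫ x²·1_{x≤0} dμ(x) > 0, and consequently G(y) ≥ G(0) > 0 for all y ≥ 0; in particular G has no zero on [0, ∞). -/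
/-!
With zero mean, `∫_{(-∞,y]} x dμ = -∫_{(y,∞)} x dμ`, so `G y = ∫ x · min x y dμ(x)`. For `y ≥ 0`
the integrand is `x²` when `x ≤ 0` and `x · min x y`, nondecreasing in `y`, when `x > 0`; hence
`G` is nondecreasing on `[0, ∞)`, and `G 0 = ∫_{(-∞,0]} x² dμ > 0` because `μ((-∞,0)) > 0`.
-/

open MeasureTheory Set

variable {μ : Measure ℝ}

lemma MeasureTheory.IntegrableOn.Iic_of_le [IsFiniteMeasureOnCompacts μ] {f : ℝ → ℝ}
    (hf : Continuous f) {a b : ℝ} (ha : IntegrableOn f (Iic a) μ) (hab : a ≤ b) :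
    IntegrableOn f (Iic b) μ := by
  rw [← Iic_union_Ioc_eq_Iic hab]
  exact ha.union (hf.integrableOn_Icc.mono_set Ioc_subset_Icc_self)

lemma integrable_mul_min (hmom1 : Integrable (fun x : ℝ => x) μ) {y : ℝ}
    (hsq : IntegrableOn (fun x : ℝ => x ^ 2) (Iic y) μ) :
    Integrable (fun x => x * min x y) μ := by
  rw [← integrableOn_univ, ← Iic_union_Ioi (a := y)]
  refine IntegrableOn.union ?_ ?_
  · refine hsq.congr_fun (fun x (hx : x ≤ y) => ?_) measurableSet_Iic
    rw [min_eq_left hx]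
    exact sq x
  · refine (hmom1.mul_const y).integrableOn.congr_fun (fun x (hx : y < x) => ?_) measurableSet_Ioi
    rw [min_eq_right hx.le]

lemma setIntegral_Iic_sq_sub_mul_eq_integral_mul_min (hmom1 : Integrable (fun x : ℝ => x) μ)
    (hmean : ∫ x, x ∂μ = 0) {y : ℝ} (hsq : IntegrableOn (fun x : ℝ => x ^ 2) (Iic y) μ) :
    ∫ x in Iic y, (x ^ 2 - y * x) ∂μ = ∫ x, x * min x y ∂μ := by
  have hlow : ∫ x in Iic y, x * min x y ∂μ = ∫ x in Iic y, x ^ 2 ∂μ :=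
    setIntegral_congr_fun measurableSet_Iic fun x (hx : x ≤ y) => by rw [min_eq_left hx, sq]
  have hup : ∫ x in Ioi y, x * min x y ∂μ = y * ∫ x in Ioi y, x ∂μ := by
    rw [← integral_const_mul]
    exact setIntegral_congr_fun measurableSet_Ioi fun x (hx : y < x) => by
      rw [min_eq_right hx.le, mul_comm]
  have hmean_split := integral_add_compl (measurableSet_Iic (a := y)) hmom1
  have hsplit := integral_add_compl (measurableSet_Iic (a := y)) (integrable_mul_min hmom1 hsq)
  rw [compl_Iic] at hmean_split hsplit
  rw [integral_sub hsq (hmom1.const_mul y).integrableOn, integral_const_mul, ← hsplit, hlow, hup]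
  linear_combination -y * hmean_split - y * hmean

lemma monotoneOn_mul_min (x : ℝ) : MonotoneOn (fun y => x * min x y) (Ici 0) := by
  intro a (ha : 0 ≤ a) b _ hab
  rcases le_or_gt x 0 with hx | hx
  · simp only [min_eq_left (hx.trans ha), min_eq_left (hx.trans (ha.trans hab)), le_refl]
  · exact mul_le_mul_of_nonneg_left (min_le_min_left x hab) hx.le

lemma monotoneOn_integral_mul_min [IsFiniteMeasureOnCompacts μ]
    (hmom1 : Integrable (fun x : ℝ => x) μ)
    (hmom2 : IntegrableOn (fun x : ℝ => x ^ 2) (Iic 0) μ) :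
    MonotoneOn (fun y => ∫ x, x * min x y ∂μ) (Ici 0) := by
  intro a (ha : 0 ≤ a) b (hb : 0 ≤ b) hab
  have hint : ∀ y, 0 ≤ y → Integrable (fun x => x * min x y) μ := fun y hy =>
    integrable_mul_min hmom1 (hmom2.Iic_of_le (continuous_pow 2) hy)
  exact integral_mono (hint a ha) (hint b hb) fun x => monotoneOn_mul_min x ha hb hab

lemma setIntegral_Iic_zero_sq_pos (hneg : 0 < μ (Iio 0))
    (hmom2 : IntegrableOn (fun x : ℝ => x ^ 2) (Iic 0) μ) :
    0 < ∫ x in Iic 0, x ^ 2 ∂μ := by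
  rw [setIntegral_pos_iff_support_of_nonneg_ae (.of_forall fun x => sq_nonneg x) hmom2]
  convert hneg using 2
  ext x
  simp [lt_iff_le_and_ne, and_comm]

/-- Let `μ` be a Borel probability measure on `ℝ` with finite first
moment and finite negative-tail second moment, with `μ((−∞,0)) > 0` and
`∫ x dμ = 0`.  Then `G(y) = ∫_{(-∞,y]} (x² − yx) dμ(x)` is nondecreasing on
`[0,∞)`, `G(0) = ∫ x²·1_{x≤0} dμ > 0`, and `G(y) ≥ G(0) > 0` for all `y ≥ 0`;
in particular `G` has no zero on `[0,∞)`. -/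
theorem G_positive_no_zero_of_zero_mean (μ : Measure ℝ) [IsProbabilityMeasure μ]
    (hmom1 : Integrable (fun x : ℝ => x) μ)
    (hmom2 : IntegrableOn (fun x : ℝ => x ^ 2) (Set.Iic 0) μ)
    (hneg : 0 < μ (Set.Iio 0))
    (hmean : ∫ x, x ∂μ = 0)
    (G : ℝ → ℝ)
    (hG : ∀ y, G y = ∫ x in Set.Iic y, (x ^ 2 - y * x) ∂μ) :
    MonotoneOn G (Set.Ici 0)
    ∧ G 0 = ∫ x in Set.Iic 0, x ^ 2 ∂μ
    ∧ 0 < G 0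
    ∧ (∀ y, 0 ≤ y → G 0 ≤ G y)
    ∧ (∀ y, 0 ≤ y → G y ≠ 0) := by
  have hmono : MonotoneOn G (Ici 0) :=
    (monotoneOn_integral_mul_min hmom1 hmom2).congr fun y (hy : 0 ≤ y) => by
      rw [hG y, setIntegral_Iic_sq_sub_mul_eq_integral_mul_min hmom1 hmean
        (hmom2.Iic_of_le (continuous_pow 2) hy)]
  have hG0 : G 0 = ∫ x in Iic 0, x ^ 2 ∂μ := by simp [hG]
  have hpos : 0 < G 0 := hG0 ▸ setIntegral_Iic_zero_sq_pos hneg hmom2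
  have hle : ∀ y, 0 ≤ y → G 0 ≤ G y := fun y hy => hmono self_mem_Ici hy hy
  exact ⟨hmono, hG0, hpos, hle, fun y hy => (hpos.trans_le (hle y hy)).ne'⟩
end

section
/- Under the one-factor model Σ = σ²ββᵀ + Δ with β₁ ≤ ⋯ ≤ β_p, δ_i² > 0, σ² > 0, suppose (1/p)Σ_{i=1}^p β_i/δ_i² > 0 and that the function G_p(y) = ν²/(pσ²) + (ν²/p) Σ_{j=1}^p (β_j/δ_j²)(β_j − y)·1_{β_j ≤ y} (for any fixed ν > 0) has a unique zero β*(p) ∈ (0, ∞). Let k_p be the number of active assets of the LOMV solution for Σ. Then k_p = #{i ∈ {1,…,p} : β_i < β*(p)}; equivalently, k_p/p = F_p(β*(p)⁻), where F_p is the empirical cdf of β₁, …, β_p. -/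
open Matrix Finset

/-- Expansion of the one-factor quadratic form. -/
lemma lomv_quad_expand {p : ℕ} (σsq : ℝ) (β δsq : Fin p → ℝ)
    (S : Matrix (Fin p) (Fin p) ℝ)
    (hS : S = σsq • Matrix.vecMulVec β β + Matrix.diagonal δsq)
    (v : Fin p → ℝ) :
    ∑ i, ∑ j, v i * S i j * v j
      = σsq * (∑ i, β i * v i) ^ 2 + ∑ i, δsq i * v i ^ 2 := by
  have hentry : ∀ i j, v i * S i j * v j
      = σsq * ((β i * v i) * (β j * v j)) + (if j = i then δsq i * (v i * v j) else 0) := by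
    intro i j
    rw [hS]
    simp only [Matrix.add_apply, Matrix.smul_apply, Matrix.vecMulVec_apply, smul_eq_mul,
      Matrix.diagonal_apply]
    by_cases h : i = j
    · subst h; simp; ring
    · rw [if_neg h, if_neg (Ne.symm h)]; ring
  calc ∑ i, ∑ j, v i * S i j * v j
      = ∑ i, (∑ j, σsq * ((β i * v i) * (β j * v j)) + ∑ j, (if j = i then δsq i * (v i * v j) else 0)) := by
        refine Finset.sum_congr rfl fun i _ => ?_
        rw [← Finset.sum_add_distrib]
        exact Finset.sum_congr rfl fun j _ => hentry i j
    _ = ∑ i, (σsq * (β i * v i) * (∑ j, β j * v j) + δsq i * (v i * v i)) := by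
        refine Finset.sum_congr rfl fun i _ => ?_
        rw [Finset.sum_ite_eq' Finset.univ i (fun j => δsq i * (v i * v j)), if_pos (Finset.mem_univ i)]
        rw [Finset.mul_sum]
        congr 1
        exact Finset.sum_congr rfl fun j _ => by ring
    _ = σsq * (∑ i, β i * v i) ^ 2 + ∑ i, δsq i * v i ^ 2 := by
        rw [Finset.sum_add_distrib, ← Finset.sum_mul]
        congr 1
        · rw [← Finset.mul_sum, sq]; ring
        · exact Finset.sum_congr rfl fun i _ => by ring

/-- **Lemma: active-set characterization via the zero of `G_p`.**
Under the one-factor model with ordered betas and positive idiosyncratic variances,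
suppose `(1/p) ∑ᵢ βᵢ/δᵢ² > 0` and that
`G_p(y) = ν²/(pσ²) + (ν²/p) ∑ⱼ (βⱼ/δⱼ²)(βⱼ − y)·1_{βⱼ ≤ y}` has a unique zero
`β*(p) ∈ (0,∞)`.  Then the number `k_p` of active assets of the LOMV solution equals
`#{i : βᵢ < β*(p)}`; equivalently `k_p/p = F_p(β*(p)⁻)` for the empirical cdf `F_p`. -/
theorem lomv_card_active_eq_card_below_Gp_zero {p : ℕ} (hp : 0 < p)
    (σsq : ℝ) (hσ : 0 < σsq) (ν : ℝ) (hν : 0 < ν)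
    (β δsq : Fin p → ℝ) (hδ : ∀ i, 0 < δsq i)
    (hmono : Monotone β)
    (hmean : 0 < (p : ℝ)⁻¹ * ∑ i, β i / δsq i)
    (Gp : ℝ → ℝ)
    (hGp : ∀ y, Gp y = ν ^ 2 / (p * σsq)
      + ν ^ 2 / p * ∑ j, (if β j ≤ y then β j / δsq j * (β j - y) else 0))
    (bstar : ℝ) (hbpos : 0 < bstar) (hbzero : Gp bstar = 0)
    (hbuniq : ∀ y, 0 < y → Gp y = 0 → y = bstar)
    (S : Matrix (Fin p) (Fin p) ℝ)
    (hS : S = σsq • Matrix.vecMulVec β β + Matrix.diagonal δsq)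
    -- w is the (unique) LOMV solution for S
    (w : Fin p → ℝ)
    (hsum : ∑ i, w i = 1)
    (hnonneg : ∀ i, 0 ≤ w i)
    (hmin : ∀ v : Fin p → ℝ, (∑ i, v i = 1) → (∀ i, 0 ≤ v i) →
      ∑ i, ∑ j, w i * S i j * w j ≤ ∑ i, ∑ j, v i * S i j * v j) :
    (Finset.univ.filter fun i : Fin p => 0 < w i).card
      = (Finset.univ.filter fun i : Fin p => β i < bstar).card := by
  have hp' : (0:ℝ) < p := by exact_mod_cast hp
  set y := bstar with hy
  -- key identity from G_p(bstar) = 0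
  have hT : ∑ j, (if β j ≤ y then β j / δsq j * (β j - y) else 0) = -(1/σsq) := by
    have h0 := hbzero
    rw [hGp] at h0
    have h1 : ν ^ 2 / p * (∑ j, (if β j ≤ y then β j / δsq j * (β j - y) else 0) + 1/σsq) = 0 := by
      rw [mul_add]
      have : ν ^ 2 / p * (1/σsq) = ν ^ 2 / (p * σsq) := by field_simp
      rw [this]; linarith
    have h2 : ν ^ 2 / p ≠ 0 := by positivity
    have := (mul_eq_zero.mp h1).resolve_left h2
    linarith
  set u : Fin p → ℝ := fun i => max (y - β i) 0 / δsq i with hu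
  have hu_nonneg : ∀ i, 0 ≤ u i := fun i => div_nonneg (le_max_right _ _) (hδ i).le
  have hupos : ∀ i, (0 < u i ↔ β i < y) := by
    intro i
    constructor
    · intro h
      by_contra hc
      push_neg at hc
      have : u i = 0 := by simp [hu, max_eq_right (by linarith : y - β i ≤ 0)]
      rw [this] at h; exact lt_irrefl _ h
    · intro h
      have : 0 < y - β i := by linarith
      exact div_pos (by rw [max_eq_left this.le]; exact this) (hδ i)
  have huzero : ∀ i, y < β i → u i = 0 := by
    intro i h
    simp [hu, max_eq_right (by linarith : y - β i ≤ 0)]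
  -- β-weighted sum of u
  have hB : ∑ i, β i * u i = 1/σsq := by
    have hpt : ∀ i, β i * u i = -(if β i ≤ y then β i / δsq i * (β i - y) else 0) := by
      intro i
      by_cases h : β i ≤ y
      · simp only [hu, if_pos h, max_eq_left (by linarith : 0 ≤ y - β i)]
        field_simp
        ring
      · push_neg at h
        simp only [hu, if_neg (not_le.mpr h), max_eq_right (by linarith : y - β i ≤ 0),
          zero_div, mul_zero, neg_zero]
    rw [Finset.sum_congr rfl (fun i _ => hpt i), Finset.sum_neg_distrib, hT]; ring
  -- the normalizer
  set S0 : ℝ := ∑ i, u i with hS0def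
  have hS0 : 0 < S0 := by
    by_contra hc
    push_neg at hc
    have h0 : ∑ i, u i = 0 := le_antisymm hc (Finset.sum_nonneg fun i _ => hu_nonneg i)
    have hall : ∀ i ∈ Finset.univ, u i = 0 :=
      (Finset.sum_eq_zero_iff_of_nonneg (fun i _ => hu_nonneg i)).mp h0
    have hz : ∑ i, β i * u i = 0 := Finset.sum_eq_zero fun i hi => by rw [hall i hi, mul_zero]
    rw [hB] at hz
    have : (0:ℝ) < 1/σsq := by positivity
    linarith
  -- the candidate optimum
  set ws : Fin p → ℝ := fun i => u i / S0 with hws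
  have hws_nonneg : ∀ i, 0 ≤ ws i := fun i => div_nonneg (hu_nonneg i) hS0.le
  have hws_sum : ∑ i, ws i = 1 := by
    simp only [hws]
    rw [← Finset.sum_div, ← hS0def, div_self hS0.ne']
  have hws_pos : ∀ i, (0 < ws i ↔ β i < y) := by
    intro i
    rw [← hupos i]
    constructor
    · intro h
      have h2 := mul_pos h hS0
      rwa [hws, div_mul_cancel₀ _ hS0.ne'] at h2
    · intro h; exact div_pos h hS0
  -- β-weighted sum of ws
  have hBs : ∑ i, β i * ws i = 1 / σsq / S0 := by
    simp only [hws]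
    rw [Finset.sum_congr rfl (fun i _ => (mul_div_assoc (β i) (u i) S0).symm),
      ← Finset.sum_div, hB]
  -- gradient identity
  have hg : ∀ i, σsq * (∑ j, β j * ws j) * β i + δsq i * ws i = max y (β i) / S0 := by
    intro i
    rw [hBs]
    have hδw : δsq i * ws i = max (y - β i) 0 / S0 := by
      simp only [hws, hu]
      rw [div_div, ← mul_div_assoc, mul_div_mul_left _ _ (hδ i).ne']
    rw [hδw]
    have hmax : β i + max (y - β i) 0 = max y (β i) := by
      rcases le_total (β i) y with h | h
      · rw [max_eq_left (by linarith : 0 ≤ y - β i), max_eq_left h]; ring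
      · rw [max_eq_right (by linarith : y - β i ≤ 0), max_eq_right h]; ring
    have h1 : σsq * (1 / σsq / S0) = 1 / S0 := by field_simp
    rw [h1, ← hmax]; ring
  -- abbreviate the beta exposures
  set Bw : ℝ := ∑ i, β i * w i with hBw
  set Bs : ℝ := ∑ i, β i * ws i with hBsdef
  -- the linear (first-order) term is nonnegative
  have hlin : 0 ≤ σsq * Bs * (Bw - Bs) + ∑ i, δsq i * ws i * (w i - ws i) := by
    have hgi : ∀ i, σsq * Bs * (β i * (w i - ws i)) + δsq i * ws i * (w i - ws i)
        = (max y (β i) / S0) * (w i - ws i) := by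
      intro i
      have h := hg i
      calc σsq * Bs * (β i * (w i - ws i)) + δsq i * ws i * (w i - ws i)
          = (σsq * Bs * β i + δsq i * ws i) * (w i - ws i) := by ring
        _ = (max y (β i) / S0) * (w i - ws i) := by rw [h]
    have hBdiff : ∑ i, β i * (w i - ws i) = Bw - Bs := by
      rw [hBw, hBsdef, ← Finset.sum_sub_distrib]
      exact Finset.sum_congr rfl fun i _ => by ring
    have hsum1 : σsq * Bs * (Bw - Bs) + ∑ i, δsq i * ws i * (w i - ws i)
        = ∑ i, (max y (β i) / S0) * (w i - ws i) := by
      rw [Finset.sum_congr rfl (fun i _ => (hgi i).symm), Finset.sum_add_distrib,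
        ← Finset.mul_sum, hBdiff]
    rw [hsum1]
    have hws_term : ∀ i, (max y (β i) / S0) * ws i = (y / S0) * ws i := by
      intro i
      rcases le_or_gt (β i) y with h | h
      · rw [max_eq_left h]
      · have : ws i = 0 := by simp [hws, huzero i h]
        rw [this, mul_zero, mul_zero]
    have hterm : ∀ i, (y / S0) * w i ≤ (max y (β i) / S0) * w i := by
      intro i
      apply mul_le_mul_of_nonneg_right _ (hnonneg i)
      gcongr
      exact le_max_left _ _
    have h1 : ∑ i, (max y (β i) / S0) * (w i - ws i)
        = ∑ i, (max y (β i) / S0) * w i - ∑ i, (max y (β i) / S0) * ws i := by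
      rw [← Finset.sum_sub_distrib]
      exact Finset.sum_congr rfl fun i _ => by ring
    have h2 : ∑ i, (max y (β i) / S0) * ws i = y / S0 := by
      rw [Finset.sum_congr rfl (fun i _ => hws_term i), ← Finset.mul_sum, hws_sum, mul_one]
    have h3 : y / S0 ≤ ∑ i, (max y (β i) / S0) * w i := by
      calc y / S0 = ∑ i, (y / S0) * w i := by rw [← Finset.mul_sum, hsum, mul_one]
        _ ≤ _ := Finset.sum_le_sum fun i _ => hterm i
    rw [h1, h2]
    linarith
  -- the idiosyncratic quadratic gap is nonpositive
  have key : ∑ i, δsq i * (w i - ws i) ^ 2 ≤ 0 := by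
    have hle := hmin ws hws_sum hws_nonneg
    rw [lomv_quad_expand σsq β δsq S hS w, lomv_quad_expand σsq β δsq S hS ws,
      ← hBw, ← hBsdef] at hle
    have hsplit : ∑ i, δsq i * w i ^ 2
        = ∑ i, δsq i * (w i - ws i) ^ 2
          + (2 * ∑ i, δsq i * ws i * (w i - ws i) + ∑ i, δsq i * ws i ^ 2) := by
      have hpt : ∀ i, δsq i * w i ^ 2
          = δsq i * (w i - ws i) ^ 2 + (2 * (δsq i * ws i * (w i - ws i)) + δsq i * ws i ^ 2) :=
        fun i => by ring
      rw [Finset.sum_congr rfl (fun i _ => hpt i), Finset.sum_add_distrib,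
        Finset.sum_add_distrib, ← Finset.mul_sum]
    have hring : σsq * Bw ^ 2 - σsq * Bs ^ 2
        = σsq * (Bw - Bs) ^ 2 + 2 * (σsq * Bs * (Bw - Bs)) := by ring
    have hsq' : 0 ≤ σsq * (Bw - Bs) ^ 2 := by positivity
    rw [hsplit] at hle
    linarith
  -- hence the optimizer coincides with the explicit candidate
  have hweq : ∀ i, w i = ws i := by
    have hz := (Finset.sum_eq_zero_iff_of_nonneg
      (fun i _ => mul_nonneg (hδ i).le (sq_nonneg _) : ∀ i ∈ Finset.univ, 0 ≤ δsq i * (w i - ws i) ^ 2)).mp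
      (le_antisymm key (Finset.sum_nonneg fun i _ => mul_nonneg (hδ i).le (sq_nonneg _)))
    intro i
    have h := hz i (Finset.mem_univ i)
    rcases mul_eq_zero.mp h with h' | h'
    · exact absurd h' (hδ i).ne'
    · have := sq_eq_zero_iff.mp h'
      linarith
  -- conclude: the active set is exactly {i : β i < bstar}
  have hset : (Finset.univ.filter fun i : Fin p => 0 < w i)
      = (Finset.univ.filter fun i : Fin p => β i < y) := by
    ext i
    simp only [Finset.mem_filter, Finset.mem_univ, true_and, hweq i, hws_pos i]
  rw [hset]
end

section
/- Let F be the cdf of a Borel probability measure on ℝ with E[X²] ≤ C for a constant C < ∞ and mean μ₀ := E[X] ≥ μ for a constant μ > 0, and let y* ≥ 0 satisfy G(y*) = 0, where G(y) = ∫_{(-∞,y]}(x² − yx) dF(x). Then y* ≤ C/μ. Moreover, if y* > 0, then the identity L = R holds, where L = ∫_{(0, y*]} x(y* − x) dF(x) and R = E[X²·1_{X≤0}] + y*·E[|X|·1_{X≤0}]. -/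
open MeasureTheory Set

/-- **Lemmas: upper bound on `y*` and the exact identity `L = R`.**
Let `μ` be a Borel probability measure on `ℝ` with `E[X²] ≤ C` and mean
`E[X] ≥ m > 0`, and let `y* ≥ 0` satisfy `G(y*) = 0` where
`G(y) = ∫_{(-∞,y]}(x² − yx) dμ`.  Then `y* ≤ C/m`; moreover, if `y* > 0`, then
`∫_{(0,y*]} x(y* − x) dμ = E[X²·1_{X≤0}] + y*·E[|X|·1_{X≤0}]`. -/
theorem ystar_bound_and_LR_identity (μ : Measure ℝ) [IsProbabilityMeasure μ]
    (hmom1 : Integrable (fun x : ℝ => x) μ)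
    (hmom2 : Integrable (fun x : ℝ => x ^ 2) μ)
    (C : ℝ) (hC : ∫ x, x ^ 2 ∂μ ≤ C)
    (m : ℝ) (hm : 0 < m) (hmean : m ≤ ∫ x, x ∂μ)
    (G : ℝ → ℝ)
    (hG : ∀ y, G y = ∫ x in Set.Iic y, (x ^ 2 - y * x) ∂μ)
    (ystar : ℝ) (hy0 : 0 ≤ ystar) (hyzero : G ystar = 0) :
    ystar ≤ C / m
    ∧ (0 < ystar →
        ∫ x in Set.Ioc 0 ystar, x * (ystar - x) ∂μ
          = (∫ x in Set.Iic 0, x ^ 2 ∂μ) + ystar * ∫ x in Set.Iic 0, |x| ∂μ) := by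
  have hf : Integrable (fun x : ℝ => x ^ 2 - ystar * x) μ :=
    hmom2.sub (hmom1.const_mul ystar)
  have hzero : ∫ x in Set.Iic ystar, (x ^ 2 - ystar * x) ∂μ = 0 := by
    rw [← hG]; exact hyzero
  -- whole-line integral is nonneg
  have hsplit : (∫ x in Set.Iic ystar, (x ^ 2 - ystar * x) ∂μ)
      + (∫ x in Set.Ioi ystar, (x ^ 2 - ystar * x) ∂μ)
      = ∫ x, (x ^ 2 - ystar * x) ∂μ := by
    have := integral_add_compl (measurableSet_Iic (a := ystar)) hf
    simpa [Set.compl_Iic] using this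
  have hpos : 0 ≤ ∫ x in Set.Ioi ystar, (x ^ 2 - ystar * x) ∂μ := by
    apply setIntegral_nonneg measurableSet_Ioi
    intro x hx
    have hx' : ystar < x := hx
    nlinarith [hy0]
  have hwhole : 0 ≤ ∫ x, (x ^ 2 - ystar * x) ∂μ := by
    rw [← hsplit, hzero, zero_add]; exact hpos
  have hsub : ∫ x, (x ^ 2 - ystar * x) ∂μ
      = (∫ x, x ^ 2 ∂μ) - ystar * ∫ x, x ∂μ := by
    rw [integral_sub hmom2 (hmom1.const_mul ystar), integral_const_mul]
  have hbound : ystar * m ≤ C := by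
    have h1 : ystar * (∫ x, x ∂μ) ≤ ∫ x, x ^ 2 ∂μ := by
      rw [hsub] at hwhole; linarith
    have h2 : ystar * m ≤ ystar * (∫ x, x ∂μ) :=
      mul_le_mul_of_nonneg_left hmean hy0
    linarith
  constructor
  · rw [le_div_iff₀ hm]; exact hbound
  · intro hypos
    have hIic0 : IntegrableOn (fun x : ℝ => x ^ 2 - ystar * x) (Set.Iic 0) μ :=
      hf.integrableOn
    have hIoc : IntegrableOn (fun x : ℝ => x ^ 2 - ystar * x) (Set.Ioc 0 ystar) μ :=
      hf.integrableOn
    have hsplit2 : ∫ x in Set.Iic ystar, (x ^ 2 - ystar * x) ∂μ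
        = (∫ x in Set.Iic 0, (x ^ 2 - ystar * x) ∂μ)
          + ∫ x in Set.Ioc 0 ystar, (x ^ 2 - ystar * x) ∂μ := by
      rw [← setIntegral_union (Set.Iic_disjoint_Ioc le_rfl) measurableSet_Ioc hIic0 hIoc,
        Set.Iic_union_Ioc_eq_Iic hy0]
    have key : ∫ x in Set.Ioc 0 ystar, (x ^ 2 - ystar * x) ∂μ
        = - ∫ x in Set.Iic 0, (x ^ 2 - ystar * x) ∂μ := by
      rw [hsplit2] at hzero; linarith
    have hL : ∫ x in Set.Ioc 0 ystar, x * (ystar - x) ∂μ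
        = - ∫ x in Set.Ioc 0 ystar, (x ^ 2 - ystar * x) ∂μ := by
      rw [← integral_neg]
      apply setIntegral_congr_fun measurableSet_Ioc
      intro x _; ring
    have habs : ∫ x in Set.Iic 0, |x| ∂μ = - ∫ x in Set.Iic 0, x ∂μ := by
      rw [← integral_neg]
      apply setIntegral_congr_fun measurableSet_Iic
      intro x hx
      exact abs_of_nonpos hx
    have hIicsub : ∫ x in Set.Iic 0, (x ^ 2 - ystar * x) ∂μ
        = (∫ x in Set.Iic 0, x ^ 2 ∂μ) - ystar * ∫ x in Set.Iic 0, x ∂μ := by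
      rw [integral_sub hmom2.integrableOn ((hmom1.const_mul ystar).integrableOn),
        integral_const_mul]
    rw [hL, key, neg_neg, hIicsub, habs]
    ring
end

section
/- Let F be the cdf of a Borel probability measure on ℝ with ε := F(0) > 0, conditional negative-tail second moment bound E[X² | Χ ≤ 0] ≤ K, and suppose y* > 0 satisfies y* ≤ D for a constant D. Then the quantity R = E[X²·1_{X≤0}] + y*·E[|X|·1_{X≤0}] satisfies R ≤ (K + D√K)·ε. Furthermore, if F satisfies the concentration bound F(x+t) − F(x) ≤ M·t for all x ≥ 0 and t > 0, and q := F(y*) − F(0), then the quantity L = ∫_{(0,y*]} x(y* − x) dF(x) satisfies L ≥ q³/(27 M²). -/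
/-!
For `R`, Cauchy–Schwarz on `{X ≤ 0}` gives `E[|X|·1_{X≤0}]² ≤ ε·E[X²·1_{X≤0}] ≤ K ε²`.
For `L`, put `δ = q / (3M)`: the concentration bound lets `(0, δ]` and `(y* − δ, y*]` carry at
most `q / 3` each, so `(δ, y* − δ]` carries at least `q / 3`, and there `x (y* − x) ≥ δ²`.
-/

open MeasureTheory Set ProbabilityTheory

theorem sq_integral_le_measureReal_univ_mul_integral_sq {α : Type*} [MeasurableSpace α]
    {ν : Measure α} [IsFiniteMeasure ν] {f : α → ℝ} (hf : MemLp f 2 ν) :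
    (∫ x, f x ∂ν) ^ 2 ≤ ν.real univ * ∫ x, f x ^ 2 ∂ν := by
  have hf1 : Integrable f ν := hf.integrable one_le_two
  have hf2 : Integrable (fun x => f x ^ 2) ν := hf.integrable_sq
  -- `c ↦ ∫ (f - c)²` is a nonnegative quadratic polynomial, so its discriminant is `≤ 0`.
  have hquad (c : ℝ) :
      0 ≤ ν.real univ * (c * c) + (-2 * ∫ x, f x ∂ν) * c + ∫ x, f x ^ 2 ∂ν := by
    have hexpand : ∫ x, (f x - c) ^ 2 ∂ν
        = ν.real univ * (c * c) + (-2 * ∫ x, f x ∂ν) * c + ∫ x, f x ^ 2 ∂ν := by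
      have hlin : Integrable (fun x => 2 * f x * c) ν := (hf1.const_mul 2).mul_const c
      have hdiff : Integrable (fun x => f x ^ 2 - 2 * f x * c) ν := hf2.sub hlin
      simp_rw [sub_sq]
      rw [integral_add hdiff (integrable_const _), integral_sub hf2 hlin,
        integral_mul_const, integral_const_mul, integral_const, smul_eq_mul]
      ring
    exact hexpand ▸ integral_nonneg fun x => sq_nonneg _
  have hdisc := discrim_le_zero hquad
  rw [discrim] at hdisc
  linarith

theorem setIntegral_sq_add_mul_setIntegral_abs_le {μ : Measure ℝ} [IsFiniteMeasure μ]
    {s : Set ℝ} (hs : IntegrableOn (fun x : ℝ => x ^ 2) s μ) {K y D : ℝ}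
    (hK : ∫ x in s, x ^ 2 ∂μ ≤ K * μ.real s) (hy : 0 ≤ y) (hD : y ≤ D) :
    (∫ x in s, x ^ 2 ∂μ) + y * ∫ x in s, |x| ∂μ ≤ (K + D * Real.sqrt K) * μ.real s := by
  have habs : MemLp (fun x : ℝ => |x|) 2 (μ.restrict s) :=
    (memLp_two_iff_integrable_sq continuous_abs.aestronglyMeasurable).2 <| by
      simp only [sq_abs]; exact hs
  have hCS : (∫ x in s, |x| ∂μ) ^ 2 ≤ μ.real s * ∫ x in s, x ^ 2 ∂μ := by
    simpa [sq_abs] using sq_integral_le_measureReal_univ_mul_integral_sq habs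
  have hm : 0 ≤ μ.real s := measureReal_nonneg
  have hI1 : ∫ x in s, |x| ∂μ ≤ Real.sqrt K * μ.real s :=
    calc ∫ x in s, |x| ∂μ ≤ |∫ x in s, |x| ∂μ| := le_abs_self _
      _ ≤ Real.sqrt (K * μ.real s ^ 2) :=
        Real.abs_le_sqrt (hCS.trans (by nlinarith [mul_le_mul_of_nonneg_left hK hm]))
      _ = Real.sqrt K * μ.real s := by rw [Real.sqrt_mul' K (sq_nonneg _), Real.sqrt_sq hm]
  have hyI1 : y * ∫ x in s, |x| ∂μ ≤ D * (Real.sqrt K * μ.real s) :=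
    mul_le_mul hD hI1 (integral_nonneg fun x => abs_nonneg x) (hy.trans hD)
  linarith

theorem sq_mul_measureReal_Ioc_le_setIntegral {μ : Measure ℝ} [IsFiniteMeasure μ]
    {δ y : ℝ} (hδ : 0 ≤ δ) :
    δ ^ 2 * μ.real (Ioc δ (y - δ)) ≤ ∫ x in Ioc 0 y, x * (y - x) ∂μ := by
  have hsub : Ioc δ (y - δ) ⊆ Ioc 0 y := Ioc_subset_Ioc hδ (by linarith)
  have hint : IntegrableOn (fun x : ℝ => x * (y - x)) (Ioc 0 y) μ :=
    (by fun_prop : Continuous fun x : ℝ => x * (y - x)).integrableOn_Icc.mono_set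
      Ioc_subset_Icc_self
  calc δ ^ 2 * μ.real (Ioc δ (y - δ)) ≤ ∫ x in Ioc δ (y - δ), x * (y - x) ∂μ := by
        rw [mul_comm, ← smul_eq_mul]
        refine setIntegral_ge_of_const_le measurableSet_Ioc (measure_ne_top _ _)
          (fun x hx => ?_) (hint.mono_set hsub)
        nlinarith [hx.1, hx.2]
    _ ≤ ∫ x in Ioc 0 y, x * (y - x) ∂μ := by
        refine setIntegral_mono_set hint ?_ hsub.eventuallyLE
        filter_upwards [ae_restrict_mem measurableSet_Ioc] with x hx
        exact mul_nonneg hx.1.le (sub_nonneg.2 hx.2)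

theorem measureReal_Ioc_le_add_add {μ : Measure ℝ} {a b c d : ℝ} (hab : a ≤ b) (hbc : b ≤ c)
    (hcd : c ≤ d) :
    μ.real (Ioc a d) ≤ μ.real (Ioc a b) + μ.real (Ioc b c) + μ.real (Ioc c d) := by
  rw [← Ioc_union_Ioc_eq_Ioc hab (hbc.trans hcd), ← Ioc_union_Ioc_eq_Ioc hbc hcd]
  linarith [measureReal_union_le (μ := μ) (Ioc a b) (Ioc b c ∪ Ioc c d),
    measureReal_union_le (μ := μ) (Ioc b c) (Ioc c d)]

theorem measureReal_Ioc_pow_three_div_le_setIntegral {μ : Measure ℝ} [IsFiniteMeasure μ]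
    {y M : ℝ} (hy : 0 < y) (hconc : ∀ x t : ℝ, 0 ≤ x → 0 < t → μ.real (Ioc x (x + t)) ≤ M * t) :
    μ.real (Ioc 0 y) ^ 3 / (27 * M ^ 2) ≤ ∫ x in Ioc 0 y, x * (y - x) ∂μ := by
  rcases (measureReal_nonneg : 0 ≤ μ.real (Ioc 0 y)).eq_or_lt with hq | hq
  · rw [← hq, zero_pow three_ne_zero, zero_div]
    simpa using sq_mul_measureReal_Ioc_le_setIntegral (μ := μ) (y := y) le_rfl
  set q := μ.real (Ioc 0 y)
  have hqM : q ≤ M * y := by simpa using hconc 0 y le_rfl hy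
  have hM : 0 < M := pos_of_mul_pos_left (hq.trans_le hqM) hy.le
  set δ := q / (3 * M) with hδ_def
  have hδ : 0 < δ := by positivity
  have hMδ : M * δ = q / 3 := by rw [hδ_def]; field_simp
  have h3δ : 3 * δ ≤ y := by nlinarith
  have hmiddle : q / 3 ≤ μ.real (Ioc δ (y - δ)) := by
    have hleft := hconc 0 δ le_rfl hδ
    have hright := hconc (y - δ) δ (by linarith) hδ
    rw [zero_add] at hleft
    rw [sub_add_cancel] at hright
    linarith [measureReal_Ioc_le_add_add (μ := μ) hδ.le (by linarith : δ ≤ y - δ)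
      (by linarith : y - δ ≤ y)]
  calc q ^ 3 / (27 * M ^ 2) = δ ^ 2 * (q / 3) := by rw [hδ_def]; field_simp; ring
    _ ≤ δ ^ 2 * μ.real (Ioc δ (y - δ)) := by gcongr
    _ ≤ ∫ x in Ioc 0 y, x * (y - x) ∂μ := sq_mul_measureReal_Ioc_le_setIntegral hδ.le

theorem measureReal_Ioc_eq_cdf_sub (μ : Measure ℝ) [IsProbabilityMeasure μ] {a b : ℝ}
    (hab : a ≤ b) : μ.real (Ioc a b) = cdf μ b - cdf μ a := by
  conv_lhs => rw [← measure_cdf μ]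
  rw [measureReal_def, StieltjesFunction.measure_Ioc,
    ENNReal.toReal_ofReal (sub_nonneg.2 (monotone_cdf μ hab))]

theorem R_upper_bound_and_L_lower_bound_general (μ : Measure ℝ) [IsProbabilityMeasure μ]
    (F : ℝ → ℝ) (hF : ∀ y, F y = (μ (Set.Iic y)).toReal)
    (hmom2 : IntegrableOn (fun x : ℝ => x ^ 2) (Set.Iic 0) μ)
    (K : ℝ) (hK : ∫ x in Set.Iic 0, x ^ 2 ∂μ ≤ K * F 0)
    (ystar : ℝ) (hy : 0 < ystar)
    (D : ℝ) (hD : ystar ≤ D)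
    (M : ℝ) (hconc : ∀ x t : ℝ, 0 ≤ x → 0 < t → F (x + t) - F x ≤ M * t) :
    (∫ x in Set.Iic 0, x ^ 2 ∂μ) + ystar * (∫ x in Set.Iic 0, |x| ∂μ)
      ≤ (K + D * Real.sqrt K) * F 0
    ∧ (F ystar - F 0) ^ 3 / (27 * M ^ 2)
      ≤ ∫ x in Set.Ioc 0 ystar, x * (ystar - x) ∂μ := by
  obtain rfl : F = cdf μ := funext fun y => by rw [hF, cdf_eq_real, measureReal_def]
  rw [cdf_eq_real] at hK ⊢
  refine ⟨setIntegral_sq_add_mul_setIntegral_abs_le hmom2 hK hy.le hD, ?_⟩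
  rw [← cdf_eq_real, ← measureReal_Ioc_eq_cdf_sub μ hy.le]
  refine measureReal_Ioc_pow_three_div_le_setIntegral hy fun x t hx ht => ?_
  rw [measureReal_Ioc_eq_cdf_sub μ (by linarith)]
  exact hconc x t hx ht

/-- **Lemmas: upper bound on `R` and lower bound on `L`.**
Let `μ` be a Borel probability measure on `ℝ` with cdf `F`, `ε = F(0) > 0` and
conditional negative-tail second moment bound `E[X² | X ≤ 0] ≤ K`, and let
`0 < y* ≤ D`.  Then `R = E[X²·1_{X≤0}] + y*·E[|X|·1_{X≤0}] ≤ (K + D√K)·ε`.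
Furthermore, if `F(x+t) − F(x) ≤ M·t` for all `x ≥ 0`, `t > 0`, and
`q = F(y*) − F(0)`, then `L = ∫_{(0,y*]} x(y* − x) dμ ≥ q³/(27M²)`. -/
theorem R_upper_bound_and_L_lower_bound (μ : Measure ℝ) [IsProbabilityMeasure μ]
    (F : ℝ → ℝ) (hF : ∀ y, F y = (μ (Set.Iic y)).toReal)
    (hmom2 : IntegrableOn (fun x : ℝ => x ^ 2) (Set.Iic 0) μ)
    (hε : 0 < F 0)
    (K : ℝ) (hK : ∫ x in Set.Iic 0, x ^ 2 ∂μ ≤ K * F 0)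
    (ystar : ℝ) (hy : 0 < ystar)
    (D : ℝ) (hD : ystar ≤ D)
    (M : ℝ) (hconc : ∀ x t : ℝ, 0 ≤ x → 0 < t → F (x + t) - F x ≤ M * t) :
    (∫ x in Set.Iic 0, x ^ 2 ∂μ) + ystar * (∫ x in Set.Iic 0, |x| ∂μ)
      ≤ (K + D * Real.sqrt K) * F 0
    ∧ (F ystar - F 0) ^ 3 / (27 * M ^ 2)
      ≤ ∫ x in Set.Ioc 0 ystar, x * (ystar - x) ∂μ :=
  R_upper_bound_and_L_lower_bound_general μ F hF hmom2 K hK ystar hy D hD M hconc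
end
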